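/- arXiv:1606.00095 — 10 statements merged into one kernel-verified Lean document; each statement's English description precedes it below -/
import Mathlib

section
/- Let A be a finite nonempty index set and let Z be a positive definite real symmetric matrix indexed by A × A. Then the sum of all entries of Z⁻¹ equals the supremum over nonzero vectors x ∈ ℝ^A of (∑_{a∈A} x_a)² / (xᵀ Z x), and this supremum is attained exactly when x is a nonzero scalar multiple of the unique vector w satisfying Z w = 𝟙 (the all-ones vector). -/
/-
Writing `w` for the solution of `Z w = 𝟙`, the sum of the entries of `Z⁻¹` is `𝟙ᵀ Z⁻¹ 𝟙 = wᵀ Z w`,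
and `∑ a, x a = xᵀ Z w`. Cauchy–Schwarz for the inner product `⟪x, y⟫ = xᵀ Z y` gives
`(xᵀ Z w)² ≤ (xᵀ Z x)(wᵀ Z w)`, with equality exactly when `x` is a multiple of `w`.
-/

namespace Matrix

variable {n R : Type*} [Fintype n]

lemma IsHermitian.isSymm_toBilin' [DecidableEq n] [CommRing R] [StarRing R] [TrivialStar R]
    {Z : Matrix n n R} (hZ : Z.IsHermitian) : LinearMap.IsSymm Z.toBilin' :=
  LinearMap.BilinForm.isSymm_iff.mp <| isSymm_toBilin'_iff_isSymm.mpr <|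
    isHermitian_iff_isSymm.mp hZ

lemma mulVec_bijective [DecidableEq n] [CommRing R] {Z : Matrix n n R} (hZ : IsUnit Z) :
    Function.Bijective Z.mulVec :=
  ⟨mulVec_injective_of_isUnit hZ, mulVec_surjective_iff_isUnit.mpr hZ⟩

lemma sum_sum_inv_eq_dotProduct_mulVec [DecidableEq n] [CommRing R] {Z : Matrix n n R}
    (hZ : IsUnit Z) {w : n → R} (hw : Z *ᵥ w = 1) :
    ∑ a, ∑ b, Z⁻¹ a b = w ⬝ᵥ Z *ᵥ w := by
  have hw' : w = Z⁻¹ *ᵥ 1 := by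
    rw [← hw, mulVec_mulVec, nonsing_inv_mul _ ((isUnit_iff_isUnit_det Z).mp hZ), one_mulVec]
  rw [hw, dotProduct_one, hw']
  simp only [mulVec, dotProduct_one]

variable [Field R] [LinearOrder R] [IsStrictOrderedRing R] [StarRing R] [TrivialStar R]
  {Z : Matrix n n R}

lemma PosSemidef.dotProduct_mulVec_sq_le (hZ : Z.PosSemidef) (x y : n → R) :
    (x ⬝ᵥ Z *ᵥ y) ^ 2 ≤ (x ⬝ᵥ Z *ᵥ x) * (y ⬝ᵥ Z *ᵥ y) := by
  classical
  simpa only [toBilin'_apply'] using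
    Z.toBilin'.apply_sq_le_of_symm
      (fun x => by simpa [toBilin'_apply'] using hZ.dotProduct_mulVec_nonneg x)
      hZ.isHermitian.isSymm_toBilin' x y

lemma PosDef.dotProduct_mulVec_sq_eq_iff (hZ : Z.PosDef) {y : n → R} (hy : y ≠ 0) (x : n → R) :
    (x ⬝ᵥ Z *ᵥ y) ^ 2 = (x ⬝ᵥ Z *ᵥ x) * (y ⬝ᵥ Z *ᵥ y) ↔ ∃ c : R, x = c • y := by
  classical
  have hlt := Z.toBilin'.apply_sq_lt_iff_linearIndependent_of_symm
    (fun x hx => by simpa [toBilin'_apply'] using hZ.dotProduct_mulVec_pos hx)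
    hZ.isHermitian.isSymm_toBilin' x y
  simp only [toBilin'_apply', linearIndependent_fin2] at hlt
  rw [← not_iff_not, ← Ne, ← (hZ.posSemidef.dotProduct_mulVec_sq_le x y).lt_iff_ne, hlt]
  simp [hy, eq_comm]

variable {v w : n → R}

lemma PosSemidef.sq_dotProduct_div_le (hZ : Z.PosSemidef) (hw : Z *ᵥ w = v) (x : n → R) :
    (x ⬝ᵥ v) ^ 2 / (x ⬝ᵥ Z *ᵥ x) ≤ w ⬝ᵥ Z *ᵥ w := by
  rw [← hw]
  refine div_le_of_le_mul₀ (by simpa using hZ.dotProduct_mulVec_nonneg x)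
    (by simpa using hZ.dotProduct_mulVec_nonneg w) ?_
  simpa only [mul_comm] using hZ.dotProduct_mulVec_sq_le x w

lemma PosSemidef.isGreatest_sq_dotProduct_div (hZ : Z.PosSemidef) (hw : Z *ᵥ w = v)
    (hw0 : w ≠ 0) :
    IsGreatest {r | ∃ x : n → R, x ≠ 0 ∧ r = (x ⬝ᵥ v) ^ 2 / (x ⬝ᵥ Z *ᵥ x)} (w ⬝ᵥ Z *ᵥ w) := by
  refine ⟨⟨w, hw0, ?_⟩, ?_⟩
  · rw [← hw, dotProduct_comm w (Z *ᵥ w), sq, mul_self_div_self]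
  · rintro r ⟨x, -, rfl⟩
    exact hZ.sq_dotProduct_div_le hw x

lemma PosDef.sq_dotProduct_div_eq_iff (hZ : Z.PosDef) (hw : Z *ᵥ w = v) (hw0 : w ≠ 0)
    {x : n → R} (hx : x ≠ 0) :
    (x ⬝ᵥ v) ^ 2 / (x ⬝ᵥ Z *ᵥ x) = w ⬝ᵥ Z *ᵥ w ↔ ∃ c : R, c ≠ 0 ∧ x = c • w := by
  rw [← hw, div_eq_iff (by simpa using (hZ.dotProduct_mulVec_pos hx).ne'), mul_comm,
    hZ.dotProduct_mulVec_sq_eq_iff hw0]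
  refine exists_congr fun c => ⟨fun hc => ⟨?_, hc⟩, And.right⟩
  rintro rfl
  exact hx (by simpa using hc)

end Matrix

open Matrix

/-- For a positive definite real symmetric matrix `Z` indexed by a finite
nonempty set `A`, the sum of the entries of `Z⁻¹` equals the supremum of the quotients
`(∑ a, x a)² / (xᵀ Z x)` over nonzero `x`, and the supremum is attained exactly at the
nonzero scalar multiples of the unique weighting `w` with `Z w = 𝟙`. -/
theorem stmt_0 {A : Type*} [Fintype A] [DecidableEq A] [Nonempty A]
    (Z : Matrix A A ℝ) (hZ : Z.PosDef) :
    (∃! w : A → ℝ, Z.mulVec w = fun _ => 1) ∧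
    ∀ w : A → ℝ, Z.mulVec w = (fun _ => 1) →
      ((∑ a, ∑ b, Z⁻¹ a b) =
          sSup {r : ℝ | ∃ x : A → ℝ, x ≠ 0 ∧ r = (∑ a, x a) ^ 2 / (x ⬝ᵥ Z.mulVec x)} ∧
        ∀ x : A → ℝ, x ≠ 0 →
          ((∑ a, x a) ^ 2 / (x ⬝ᵥ Z.mulVec x) = ∑ a, ∑ b, Z⁻¹ a b ↔
            ∃ c : ℝ, c ≠ 0 ∧ x = c • w)) := by
  refine ⟨(mulVec_bijective hZ.isUnit).existsUnique _, fun w hw => ?_⟩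
  have hw0 : w ≠ 0 := by
    rintro rfl
    simpa using congrFun hw (Classical.arbitrary A)
  have hsum (x : A → ℝ) : ∑ a, x a = x ⬝ᵥ fun _ => 1 := (dotProduct_one x).symm
  rw [sum_sum_inv_eq_dotProduct_mulVec hZ.isUnit hw]
  simp only [hsum]
  exact ⟨((hZ.posSemidef.isGreatest_sq_dotProduct_div hw hw0).csSup_eq).symm,
    fun x hx => hZ.sq_dotProduct_div_eq_iff hw hw0 hx⟩
end

section
/- Let (A,d) be a finite nonempty metric space such that d(a,b) > log(#A − 1) for all distinct a, b ∈ A. Then the similarity matrix Z_A is invertible and the unique weighting w = Z_A⁻¹𝟙 has all entries strictly positive; in particular the magnitude |A| = ∑_{a∈A} w_a is defined and positive. -/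
open Matrix BigOperators

/-- A finite metric space whose nonzero distances all exceed `log(#A - 1)`
has an invertible similarity matrix, a strictly positive (unique) weighting
`w = Z⁻¹ 𝟙`, and hence a well-defined positive magnitude `∑ a, w a`. -/
theorem stmt_1 {X : Type*} [MetricSpace X] [Fintype X] [DecidableEq X] [Nonempty X]
    (h : ∀ a b : X, a ≠ b → Real.log ((Fintype.card X : ℝ) - 1) < dist a b) :
    IsUnit (Matrix.of fun a b : X => Real.exp (-dist a b)).det ∧
    (∀ a : X,
      0 < (Matrix.of fun a b : X => Real.exp (-dist a b))⁻¹.mulVec (fun _ => 1) a) ∧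
    0 < ∑ a : X, (Matrix.of fun a b : X => Real.exp (-dist a b))⁻¹.mulVec (fun _ => 1) a := by
  set Z : Matrix X X ℝ := Matrix.of fun a b : X => Real.exp (-dist a b) with hZ
  have Zpos : ∀ a b : X, 0 < Z a b := fun a b => Real.exp_pos _
  have Zdiag : ∀ a : X, Z a a = 1 := by
    intro a; simp [hZ]
  -- off-diagonal entries are < 1/(card-1)
  have Zlt : ∀ a b : X, a ≠ b → Z a b < ((Fintype.card X : ℝ) - 1)⁻¹ := by
    intro a b hab
    have hcard : 1 < Fintype.card X := Fintype.one_lt_card_iff_nontrivial.mpr ⟨a, b, hab⟩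
    have hpos : (0 : ℝ) < (Fintype.card X : ℝ) - 1 := by
      have : (1 : ℝ) < (Fintype.card X : ℝ) := by exact_mod_cast hcard
      linarith
    have := h a b hab
    have h1 : Z a b < Real.exp (-(Real.log ((Fintype.card X : ℝ) - 1))) := by
      exact Real.exp_lt_exp.mpr (by linarith)
    calc Z a b < Real.exp (-(Real.log ((Fintype.card X : ℝ) - 1))) := h1
      _ = ((Fintype.card X : ℝ) - 1)⁻¹ := by
          rw [Real.exp_neg, Real.exp_log hpos]
  -- strict diagonal dominance
  have hdd : ∀ a : X, ∑ b ∈ Finset.univ.erase a, ‖Z a b‖ < ‖Z a a‖ := by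
    intro a
    rcases Finset.eq_empty_or_nonempty (Finset.univ.erase a) with he | hne
    · rw [he]
      simp [Zdiag a]
    · have hcard : 1 < Fintype.card X := by
        obtain ⟨b, hb⟩ := hne
        exact Fintype.one_lt_card_iff_nontrivial.mpr
          ⟨a, b, (Finset.ne_of_mem_erase hb).symm⟩
    -- each term < 1/(card-1), and there are card-1 terms
      have hpos : (0 : ℝ) < (Fintype.card X : ℝ) - 1 := by
        have : (1 : ℝ) < (Fintype.card X : ℝ) := by exact_mod_cast hcard
        linarith
      have hcardsum : ∑ _b ∈ Finset.univ.erase a, ((Fintype.card X : ℝ) - 1)⁻¹ = 1 := by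
        rw [Finset.sum_const, Finset.card_erase_of_mem (Finset.mem_univ a),
          Finset.card_univ, nsmul_eq_mul]
        have : ((Fintype.card X - 1 : ℕ) : ℝ) = (Fintype.card X : ℝ) - 1 := by
          have : 1 ≤ Fintype.card X := le_of_lt hcard
          push_cast [this]; ring
        rw [this, mul_inv_cancel₀ (ne_of_gt hpos)]
      have : ∑ b ∈ Finset.univ.erase a, ‖Z a b‖ <
          ∑ _b ∈ Finset.univ.erase a, ((Fintype.card X : ℝ) - 1)⁻¹ := by
        apply Finset.sum_lt_sum_of_nonempty hne
        intro b hb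
        rw [Real.norm_eq_abs, abs_of_pos (Zpos a b)]
        exact Zlt a b (Finset.ne_of_mem_erase hb).symm
      rw [hcardsum] at this
      rw [Real.norm_eq_abs, Zdiag a, abs_one]
      exact this
  have hdet : Z.det ≠ 0 := det_ne_zero_of_sum_row_lt_diag hdd
  have hunit : IsUnit Z.det := isUnit_iff_ne_zero.mpr hdet
  set w : X → ℝ := Z⁻¹.mulVec (fun _ => 1) with hw
  have hZw : Z.mulVec w = fun _ => 1 := by
    rw [hw, Matrix.mulVec_mulVec, Matrix.mul_nonsing_inv Z hunit, Matrix.one_mulVec]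
  have hrow : ∀ a : X, ∑ b : X, Z a b * w b = 1 := by
    intro a
    have := congrFun hZw a
    simpa [Matrix.mulVec, dotProduct] using this
  -- positivity of w
  have hwpos : ∀ a : X, 0 < w a := by
    by_contra hcon
    push_neg at hcon
    obtain ⟨a₀, ha₀⟩ := hcon
    -- take the minimizer
    obtain ⟨a, -, ha⟩ := Finset.exists_min_image Finset.univ w ⟨a₀, Finset.mem_univ a₀⟩
    have hamin : ∀ b : X, w a ≤ w b := fun b => ha b (Finset.mem_univ b)
    have hwa : w a ≤ 0 := le_trans (hamin a₀) ha₀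
    obtain ⟨m, -, hm⟩ := Finset.exists_max_image Finset.univ w ⟨a₀, Finset.mem_univ a₀⟩
    have hmmax : ∀ b : X, w b ≤ w m := fun b => hm b (Finset.mem_univ b)
    set M := w m with hM
    have hrowa : w a = 1 - ∑ b ∈ Finset.univ.erase a, Z a b * w b := by
      have := hrow a
      rw [← Finset.add_sum_erase Finset.univ (fun b => Z a b * w b) (Finset.mem_univ a),
        Zdiag a, one_mul] at this
      linarith
    rcases le_or_gt M 0 with hM0 | hM0
    · -- all entries nonpositive: row a gives w a ≥ 1
      have hsle : ∑ b ∈ Finset.univ.erase a, Z a b * w b ≤ 0 := by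
        apply Finset.sum_nonpos
        intro b _
        exact mul_nonpos_of_nonneg_of_nonpos (le_of_lt (Zpos a b))
          (le_trans (hmmax b) hM0)
      linarith [hrowa]
    · -- M > 0 case
      have ham : a ≠ m := by
        intro hh; rw [hh] at hwa; linarith
      have hcard : 1 < Fintype.card X := Fintype.one_lt_card_iff_nontrivial.mpr ⟨a, m, ham⟩
      have hposc : (0 : ℝ) < (Fintype.card X : ℝ) - 1 := by
        have : (1 : ℝ) < (Fintype.card X : ℝ) := by exact_mod_cast hcard
        linarith
      -- bound for row m: M ≤ 1 - w a
      have hrowm : M = 1 - ∑ b ∈ Finset.univ.erase m, Z m b * w b := by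
        have := hrow m
        rw [← Finset.add_sum_erase Finset.univ (fun b => Z m b * w b) (Finset.mem_univ m),
          Zdiag m, one_mul] at this
        linarith
      have hcardsum : ∀ c : X, ∑ _b ∈ Finset.univ.erase c, ((Fintype.card X : ℝ) - 1)⁻¹ = 1 := by
        intro c
        rw [Finset.sum_const, Finset.card_erase_of_mem (Finset.mem_univ c),
          Finset.card_univ, nsmul_eq_mul]
        have : ((Fintype.card X - 1 : ℕ) : ℝ) = (Fintype.card X : ℝ) - 1 := by
          have : 1 ≤ Fintype.card X := le_of_lt hcard
          push_cast [this]; ring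
        rw [this, mul_inv_cancel₀ (ne_of_gt hposc)]
      have hmlb : w a ≤ ∑ b ∈ Finset.univ.erase m, Z m b * w b := by
        calc w a = ∑ _b ∈ Finset.univ.erase m, ((Fintype.card X : ℝ) - 1)⁻¹ * w a := by
              rw [← Finset.sum_mul, hcardsum m, one_mul]
          _ ≤ ∑ b ∈ Finset.univ.erase m, Z m b * w b := by
              apply Finset.sum_le_sum
              intro b hb
              rcases le_or_gt 0 (w b) with hb0 | hb0
              · have h1 : ((Fintype.card X : ℝ) - 1)⁻¹ * w a ≤ 0 :=
                  mul_nonpos_of_nonneg_of_nonpos (le_of_lt (inv_pos.mpr hposc)) hwa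
                exact le_trans h1 (mul_nonneg (le_of_lt (Zpos m b)) hb0)
              · have h1 : ((Fintype.card X : ℝ) - 1)⁻¹ * w a ≤
                    ((Fintype.card X : ℝ) - 1)⁻¹ * w b :=
                  mul_le_mul_of_nonneg_left (hamin b) (le_of_lt (inv_pos.mpr hposc))
                have h2 : ((Fintype.card X : ℝ) - 1)⁻¹ * w b ≤ Z m b * w b := by
                  have := Zlt m b (Finset.ne_of_mem_erase hb).symm
                  nlinarith
                linarith
      have hMub : M ≤ 1 - w a := by rw [hrowm]; linarith
      -- row a: strict bound
      have hane : (Finset.univ.erase a).Nonempty :=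
        ⟨m, Finset.mem_erase.mpr ⟨(Ne.symm ham), Finset.mem_univ m⟩⟩
      have hsum_lt : ∑ b ∈ Finset.univ.erase a, Z a b * w b < M := by
        calc ∑ b ∈ Finset.univ.erase a, Z a b * w b
            < ∑ _b ∈ Finset.univ.erase a, ((Fintype.card X : ℝ) - 1)⁻¹ * M := by
              apply Finset.sum_lt_sum_of_nonempty hane
              intro b hb
              have h1 : Z a b * w b ≤ Z a b * M :=
                mul_le_mul_of_nonneg_left (hmmax b) (le_of_lt (Zpos a b))
              have h2 : Z a b * M < ((Fintype.card X : ℝ) - 1)⁻¹ * M :=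
                mul_lt_mul_of_pos_right (Zlt a b (Finset.ne_of_mem_erase hb).symm) hM0
              linarith
          _ = M := by rw [← Finset.sum_mul, hcardsum a, one_mul]
      have : w a > 1 - M := by rw [hrowa]; linarith
      linarith
  refine ⟨hunit, hwpos, ?_⟩
  exact Finset.sum_pos (fun a _ => hwpos a) Finset.univ_nonempty
end

section
/- Let (A,d) be a finite nonempty homogeneous metric space, i.e., for every a, b ∈ A there is a bijective isometry f : A → A with f(a) = b, and fix any point a₀ ∈ A. Then the quantity ∑_{b∈A} exp(-d(a,b)) is independent of a ∈ A, the constant vector w with w_a = (∑_{b∈A} exp(-d(a₀,b)))⁻¹ is a weighting on A with all entries positive, and the magnitude |A| = ∑_{a∈A} w_a satisfies |A| = (#A)² / ∑_{a,b∈A} exp(-d(a,b)) = #A / ∑_{b∈A} exp(-d(a₀,b)). -/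
open Matrix BigOperators

/-- For a finite nonempty homogeneous metric space `X` and any fixed
point `a₀`, the sum `∑ b, exp (-d a b)` does not depend on `a`, the constant vector
with entries `(∑ b, exp (-d a₀ b))⁻¹` is a positive weighting on `X`, and the
magnitude equals `(#X)² / ∑_{a,b} exp (-d a b) = #X / ∑_b exp (-d a₀ b)`. -/
theorem stmt_2 {X : Type*} [MetricSpace X] [Fintype X] [Nonempty X]
    (hHom : ∀ a b : X, ∃ f : X ≃ᵢ X, f a = b) (a₀ : X) :
    (∀ a : X, ∑ b : X, Real.exp (-dist a b) = ∑ b : X, Real.exp (-dist a₀ b)) ∧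
    (0 < (∑ b : X, Real.exp (-dist a₀ b))⁻¹) ∧
    ((Matrix.of fun a b : X => Real.exp (-dist a b)).mulVec
      (fun _ => (∑ b : X, Real.exp (-dist a₀ b))⁻¹) = fun _ => 1) ∧
    (∑ _a : X, (∑ b : X, Real.exp (-dist a₀ b))⁻¹ =
      (Fintype.card X : ℝ) ^ 2 / ∑ a : X, ∑ b : X, Real.exp (-dist a b)) ∧
    (∑ _a : X, (∑ b : X, Real.exp (-dist a₀ b))⁻¹ =
      (Fintype.card X : ℝ) / ∑ b : X, Real.exp (-dist a₀ b)) := by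
  set S : ℝ := ∑ b : X, Real.exp (-dist a₀ b) with hS
  have hconst : ∀ a : X, ∑ b : X, Real.exp (-dist a b) = S := by
    intro a
    obtain ⟨f, hf⟩ := hHom a₀ a
    rw [hS]
    symm
    rw [← Equiv.sum_comp f.toEquiv (fun b => Real.exp (-dist a b))]
    apply Finset.sum_congr rfl
    intro b _
    simp only [IsometryEquiv.coe_toEquiv]
    rw [← hf, f.isometry.dist_eq]
  have hSpos : 0 < S := by
    apply Finset.sum_pos (fun b _ => Real.exp_pos _) Finset.univ_nonempty
  have hcard : (0 : ℝ) < Fintype.card X := by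
    exact_mod_cast Fintype.card_pos
  refine ⟨hconst, inv_pos.mpr hSpos, ?_, ?_, ?_⟩
  · funext a
    simp only [Matrix.mulVec, dotProduct, Matrix.of_apply]
    rw [← Finset.sum_mul, hconst a]
    field_simp
  · have hdd : ∑ a : X, ∑ b : X, Real.exp (-dist a b) = Fintype.card X * S := by
      rw [Finset.sum_congr rfl (fun a _ => hconst a), Finset.sum_const,
        Finset.card_univ, nsmul_eq_mul]
    rw [hdd, Finset.sum_const, Finset.card_univ, nsmul_eq_mul]
    field_simp
  · rw [Finset.sum_const, Finset.card_univ, nsmul_eq_mul]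
    field_simp
end

section
/- Let (A,d_A) and (B,d_B) be finite metric spaces with weightings w ∈ ℝ^A and v ∈ ℝ^B respectively, and equip the product set A × B with the metric d((a,b),(a',b')) = d_A(a,a') + d_B(b,b'). Then the vector x ∈ ℝ^{A×B} defined by x_{(a,b)} = w_a · v_b is a weighting on A × B, and consequently the magnitude of A × B equals (∑_{a∈A} w_a) · (∑_{b∈B} v_b), i.e., |A ×₁ B| = |A| · |B|. -/
open Matrix BigOperators

/-- If `w` and `v` are weightings on finite metric spaces `X` and `Y`,
then `(a,b) ↦ w a * v b` is a weighting on the product `X ×₁ Y` with the sum metric,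
and the magnitude of the product is the product of the magnitudes. -/
theorem stmt_3 {X Y : Type*} [MetricSpace X] [MetricSpace Y] [Fintype X] [Fintype Y]
    (w : X → ℝ) (v : Y → ℝ)
    (hw : (Matrix.of fun a b : X => Real.exp (-dist a b)).mulVec w = fun _ => 1)
    (hv : (Matrix.of fun a b : Y => Real.exp (-dist a b)).mulVec v = fun _ => 1) :
    ((Matrix.of fun p q : X × Y => Real.exp (-(dist p.1 q.1 + dist p.2 q.2))).mulVec
      (fun p => w p.1 * v p.2) = fun _ => 1) ∧
    (∑ p : X × Y, w p.1 * v p.2 = (∑ a : X, w a) * (∑ b : Y, v b)) := by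
  constructor
  · funext p
    have hwa := congrFun hw p.1
    have hvb := congrFun hv p.2
    simp only [Matrix.mulVec, dotProduct, Matrix.of_apply] at hwa hvb ⊢
    rw [Fintype.sum_prod_type]
    calc ∑ a : X, ∑ b : Y, Real.exp (-(dist p.1 a + dist p.2 b)) * (w a * v b)
        = (∑ a : X, Real.exp (-dist p.1 a) * w a) * (∑ b : Y, Real.exp (-dist p.2 b) * v b) := by
          rw [Finset.sum_mul_sum]
          congr 1; funext a; congr 1; funext b
          rw [neg_add, Real.exp_add]; ring
      _ = 1 := by rw [hwa, hvb, one_mul]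
  · rw [Fintype.sum_prod_type, ← Finset.sum_mul_sum]
end

section
/- Let (A,d) be a finite nonempty metric space, and for t > 0 let tA denote (A, t·d) with similarity matrix Z_{tA}(a,b) = exp(-t·d(a,b)). Then: (1) the set of t > 0 for which Z_{tA} is not invertible is finite; (2) there exists t₀ > 0 such that Z_{tA} is invertible for all t ≥ t₀ and the magnitude function t ↦ |tA| is monotone increasing on [t₀,∞); and (3) lim_{t→∞} |tA| = #A. -/
open Matrix BigOperators Filter Topology

/-!
As `t → ∞` the similarity matrix `Z_t` tends to the identity, so it is eventually invertible
and its weighting `w_t = Z_t⁻¹ 𝟙` tends to `𝟙`; hence `|tA| = ∑ₐ w_t(a) → #A`. Since `det Z_t`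
is real analytic in `t` and not identically zero, its zeros in `(0, ∞)` lie in a compact
interval and are isolated, so there are finitely many. Differentiating `Z_t⁻¹` gives
`d|tA|/dt = ∑_{a,b} d(a,b) e^{-t d(a,b)} w_t(a) w_t(b)`, which is nonnegative once the
weighting is positive.
-/

section MatrixLemmas

variable {n : Type*} [Fintype n]

theorem Matrix.IsSymm.sum_sum_mul_mul_apply {R : Type*} [CommSemiring R] {G : Matrix n n R}
    (hG : G.IsSymm) (A : Matrix n n R) :
    ∑ i, ∑ j, (G * A * G) i j = G *ᵥ 1 ⬝ᵥ A *ᵥ (G *ᵥ 1) := by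
  have hsum : ∑ i, ∑ j, (G * A * G) i j = 1 ⬝ᵥ (G * A * G) *ᵥ 1 := by
    simp [dotProduct, mulVec]
  rw [hsum, ← mulVec_mulVec, ← mulVec_mulVec, dotProduct_mulVec, ← hG.eq, vecMul_transpose, hG.eq]

variable [DecidableEq n] {𝕜 : Type*} [NontriviallyNormedField 𝕜]

theorem analyticOnNhd_matrix_det {E : Type*} [NormedAddCommGroup E] [NormedSpace 𝕜 E]
    {M : E → Matrix n n 𝕜} {s : Set E} (hM : ∀ i j, AnalyticOnNhd 𝕜 (fun x => M x i j) s) :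
    AnalyticOnNhd 𝕜 (fun x => (M x).det) s := by
  simp only [det_apply']
  exact Finset.analyticOnNhd_fun_sum _ fun σ _ =>
    analyticOnNhd_const.mul (Finset.analyticOnNhd_fun_prod _ fun i _ => hM _ _)

attribute [local instance] Matrix.linftyOpNormedRing Matrix.linftyOpNormedAlgebra in
theorem hasDerivAt_matrix_inv_apply [CompleteSpace 𝕜] {M : 𝕜 → Matrix n n 𝕜}
    {M' : Matrix n n 𝕜} {x : 𝕜} (hM : ∀ i j, HasDerivAt (fun y => M y i j) (M' i j) x)
    (hx : IsUnit (M x).det) (i j : n) :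
    HasDerivAt (fun y => (M y)⁻¹ i j) (-((M x)⁻¹ * M' * (M x)⁻¹) i j) x := by
  -- instance search does not find completeness for the `linftyOp` uniform structure by itself
  have : HasSummableGeomSeries (Matrix n n 𝕜) :=
    @instHasSummableGeomSeriesOfCompleteSpace _ _ (inferInstanceAs (CompleteSpace (n → n → 𝕜)))
  obtain ⟨u, hu⟩ := (isUnit_iff_isUnit_det _).2 hx
  have hM' : HasDerivAt M M' x := hasDerivAt_pi.2 fun i => hasDerivAt_pi.2 (hM i)
  have hinv := (hu ▸ hasFDerivAt_ringInverse (𝕜 := 𝕜) u).comp_hasDerivAt x hM'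
  simp only [← Ring.inverse_unit, hu] at hinv
  simp only [nonsing_inv_eq_ringInverse]
  exact hasDerivAt_pi.1 (hasDerivAt_pi.1 hinv i) j

end MatrixLemmas

theorem AnalyticOnNhd.finite_inter_zeros_of_bddBelow {f : ℝ → ℝ} (hf : AnalyticOnNhd ℝ f Set.univ)
    {T : ℝ} (hT : ∀ t ≥ T, f t ≠ 0) {s : Set ℝ} (hs : BddBelow s) :
    (s ∩ {t | f t = 0}).Finite := by
  obtain ⟨b, hb⟩ := hs
  have hne : ∀ᶠ t in codiscreteWithin (Set.Icc b T), f t ≠ 0 :=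
    codiscreteWithin_mono (Set.subset_univ _) <|
      (hf.eqOn_zero_or_eventually_ne_zero_of_preconnected isPreconnected_univ).resolve_left
        fun h => hT T le_rfl (h (Set.mem_univ T))
  refine (isCompact_Icc.finite_sdiff_of_mem_codiscreteWithin hne).subset ?_
  rintro t ⟨hts, hft⟩
  exact ⟨⟨hb hts, le_of_not_gt fun hlt => hT t hlt.le hft⟩, fun h => h hft⟩

namespace MetricSpace

variable (X : Type*) [MetricSpace X]

noncomputable def similarityMatrix (t : ℝ) : Matrix X X ℝ :=
  of fun a b => Real.exp (-(t * dist a b))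

variable {X}

theorem similarityMatrix_isSymm (t : ℝ) : (similarityMatrix X t).IsSymm := by
  ext a b
  simp [similarityMatrix, dist_comm]

theorem hasDerivAt_similarityMatrix_apply (t : ℝ) (a b : X) :
    HasDerivAt (fun s => similarityMatrix X s a b) (-dist a b * similarityMatrix X t a b) t := by
  simpa [similarityMatrix, mul_comm] using ((hasDerivAt_id t).mul_const (dist a b)).neg.exp

theorem analyticOnNhd_det_similarityMatrix [Fintype X] [DecidableEq X] :
    AnalyticOnNhd ℝ (fun t => (similarityMatrix X t).det) Set.univ :=
  analyticOnNhd_matrix_det fun _ _ => ((analyticOnNhd_id.mul analyticOnNhd_const).neg).rexp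

theorem tendsto_similarityMatrix_atTop [DecidableEq X] :
    Tendsto (similarityMatrix X) atTop (𝓝 1) := by
  refine tendsto_pi_nhds.2 fun a => tendsto_pi_nhds.2 fun b => ?_
  rcases eq_or_ne a b with rfl | hab
  · simp [similarityMatrix]
  · simpa [similarityMatrix, one_apply_ne hab] using tendsto_id.atTop_mul_const (dist_pos.2 hab)

variable [Fintype X] [DecidableEq X]

variable (X) in
noncomputable def weighting (t : ℝ) : X → ℝ :=
  (similarityMatrix X t)⁻¹ *ᵥ 1

variable (X) in
noncomputable def magnitude (t : ℝ) : ℝ :=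
  ∑ a, ∑ b, (similarityMatrix X t)⁻¹ a b

theorem magnitude_eq_sum_weighting (t : ℝ) : magnitude X t = ∑ a, weighting X t a := by
  simp [magnitude, weighting, mulVec, dotProduct]

theorem eventually_isUnit_det_similarityMatrix :
    ∀ᶠ t in atTop, IsUnit (similarityMatrix X t).det := by
  have hdet : Tendsto (fun t => (similarityMatrix X t).det) atTop (𝓝 1) := by
    rw [← det_one (n := X) (R := ℝ)]
    exact (continuous_id.matrix_det.tendsto _).comp tendsto_similarityMatrix_atTop
  simpa using hdet.eventually_ne one_ne_zero

theorem finite_setOf_not_isUnit_det_similarityMatrix :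
    {t : ℝ | 0 < t ∧ ¬IsUnit (similarityMatrix X t).det}.Finite := by
  obtain ⟨T, hT⟩ := eventually_atTop.1 (eventually_isUnit_det_similarityMatrix (X := X))
  have h := analyticOnNhd_det_similarityMatrix.finite_inter_zeros_of_bddBelow
    (fun t ht => (hT t ht).ne_zero) (bddBelow_Ioi (a := 0))
  convert h using 1
  ext t
  simp [isUnit_iff_ne_zero]

theorem tendsto_weighting_atTop : Tendsto (weighting X) atTop (𝓝 1) := by
  have hinv : ContinuousAt Inv.inv (1 : Matrix X X ℝ) :=
    continuousAt_matrix_inv _ (by simp)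
  have hmulVec : Continuous fun A : Matrix X X ℝ => A *ᵥ 1 :=
    continuous_id.matrix_mulVec continuous_const
  have h := (hmulVec.tendsto _).comp (hinv.tendsto.comp (tendsto_similarityMatrix_atTop (X := X)))
  rwa [inv_one, one_mulVec] at h

theorem eventually_weighting_pos : ∀ᶠ t in atTop, ∀ a, 0 < weighting X t a :=
  eventually_all.2 fun a =>
    (tendsto_pi_nhds.1 tendsto_weighting_atTop a).eventually (eventually_gt_nhds one_pos)

theorem tendsto_magnitude_atTop : Tendsto (magnitude X) atTop (𝓝 (Fintype.card X)) := by
  rw [show (Fintype.card X : ℝ) = ∑ a, (1 : X → ℝ) a by simp]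
  exact (tendsto_finsetSum _ fun a _ => tendsto_pi_nhds.1 tendsto_weighting_atTop a).congr
    fun t => (magnitude_eq_sum_weighting t).symm

theorem hasDerivAt_magnitude {t : ℝ} (ht : IsUnit (similarityMatrix X t).det) :
    HasDerivAt (magnitude X)
      (∑ a, ∑ b, dist a b * similarityMatrix X t a b * weighting X t a * weighting X t b) t := by
  have hinv := hasDerivAt_matrix_inv_apply
    (M' := of fun a b => -dist a b * similarityMatrix X t a b)
    (hasDerivAt_similarityMatrix_apply t) ht
  have hsymm : (similarityMatrix X t)⁻¹.IsSymm := (similarityMatrix_isSymm t).inv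
  refine (HasDerivAt.fun_sum (u := Finset.univ) fun a _ =>
    HasDerivAt.fun_sum (u := Finset.univ) fun b _ => hinv a b).congr_deriv ?_
  simp only [Finset.sum_neg_distrib]
  rw [hsymm.sum_sum_mul_mul_apply]
  change -(weighting X t ⬝ᵥ _ *ᵥ weighting X t) = _
  simp only [dotProduct, mulVec, of_apply, Finset.mul_sum, ← Finset.sum_neg_distrib]
  exact Finset.sum_congr rfl fun a _ => Finset.sum_congr rfl fun b _ => by ring

theorem monotoneOn_magnitude {t₀ : ℝ}
    (h : ∀ t ≥ t₀, IsUnit (similarityMatrix X t).det ∧ ∀ a, 0 ≤ weighting X t a) :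
    MonotoneOn (magnitude X) (Set.Ici t₀) := by
  have hderiv (t) (ht : t ∈ Set.Ici t₀) := hasDerivAt_magnitude (h t ht).1
  refine monotoneOn_of_hasDerivWithinAt_nonneg (convex_Ici t₀)
    (fun t ht => (hderiv t ht).continuousAt.continuousWithinAt)
    (fun t ht => (hderiv t (interior_subset ht)).hasDerivWithinAt) fun t ht => ?_
  have hw := (h t (interior_subset ht)).2
  exact Finset.sum_nonneg fun a _ => Finset.sum_nonneg fun b _ =>
    mul_nonneg (mul_nonneg (mul_nonneg dist_nonneg (Real.exp_pos _).le) (hw a)) (hw b)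

end MetricSpace

theorem stmt_4_general {X : Type*} [MetricSpace X] [Fintype X] [DecidableEq X] :
    ({t : ℝ | 0 < t ∧
        ¬IsUnit (Matrix.of fun a b : X => Real.exp (-(t * dist a b))).det}.Finite) ∧
    (∃ t₀ > (0 : ℝ),
      (∀ t ≥ t₀, IsUnit (Matrix.of fun a b : X => Real.exp (-(t * dist a b))).det) ∧
      MonotoneOn
        (fun t : ℝ =>
          ∑ a : X, ∑ b : X, (Matrix.of fun a b : X => Real.exp (-(t * dist a b)))⁻¹ a b)
        (Set.Ici t₀)) ∧
    Tendsto
      (fun t : ℝ =>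
        ∑ a : X, ∑ b : X, (Matrix.of fun a b : X => Real.exp (-(t * dist a b)))⁻¹ a b)
      atTop (𝓝 (Fintype.card X : ℝ)) := by
  obtain ⟨t₁, ht₁⟩ := eventually_atTop.1
    ((MetricSpace.eventually_isUnit_det_similarityMatrix (X := X)).and
      (MetricSpace.eventually_weighting_pos (X := X)))
  have hlarge (t : ℝ) (ht : t ≥ max t₁ 1) := ht₁ t (le_of_max_le_left ht)
  refine ⟨MetricSpace.finite_setOf_not_isUnit_det_similarityMatrix,
    ⟨max t₁ 1, by positivity, fun t ht => (hlarge t ht).1, ?_⟩, MetricSpace.tendsto_magnitude_atTop⟩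
  exact MetricSpace.monotoneOn_magnitude fun t ht =>
    ⟨(hlarge t ht).1, fun a => ((hlarge t ht).2 a).le⟩

/-- For a finite nonempty metric space `X` with scaled similarity
matrices `Z_t(a,b) = exp (-t d(a,b))`: (1) the set of `t > 0` where `Z_t` is not
invertible is finite; (2) for some `t₀ > 0`, `Z_t` is invertible for all `t ≥ t₀`
and the magnitude function `t ↦ |tX| = ∑_{a,b} Z_t⁻¹(a,b)` is monotone increasing
on `[t₀, ∞)`; (3) the magnitude function tends to `#X` as `t → ∞`. -/
theorem stmt_4 {X : Type*} [MetricSpace X] [Fintype X] [DecidableEq X] [Nonempty X] :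
    ({t : ℝ | 0 < t ∧
        ¬IsUnit (Matrix.of fun a b : X => Real.exp (-(t * dist a b))).det}.Finite) ∧
    (∃ t₀ > (0 : ℝ),
      (∀ t ≥ t₀, IsUnit (Matrix.of fun a b : X => Real.exp (-(t * dist a b))).det) ∧
      MonotoneOn
        (fun t : ℝ =>
          ∑ a : X, ∑ b : X, (Matrix.of fun a b : X => Real.exp (-(t * dist a b)))⁻¹ a b)
        (Set.Ici t₀)) ∧
    Tendsto
      (fun t : ℝ =>
        ∑ a : X, ∑ b : X, (Matrix.of fun a b : X => Real.exp (-(t * dist a b)))⁻¹ a b)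
      atTop (𝓝 (Fintype.card X : ℝ)) :=
  stmt_4_general
end

section
/- Let A be a nonempty compact positive definite metric space which possesses a weight measure μ, i.e., a finite signed Borel measure on A with ∫_A exp(-d(a,b)) dμ(b) = 1 for every a ∈ A. Then the magnitude of A (defined as the supremum of magnitudes of finite nonempty subsets) is finite and equals the total mass μ(A). -/
open Matrix BigOperators MeasureTheory
open scoped ENNReal

/-- The magnitude of a finite subset `s` of a metric space: the sum of the entries of
the inverse of the similarity matrix `[exp (-d(a,b))]_{a,b ∈ s}`. -/
noncomputable def finMag {X : Type*} [MetricSpace X] (s : Finset X) : ℝ :=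
  letI : DecidableEq X := Classical.decEq X
  ∑ a : {x // x ∈ s}, ∑ b : {x // x ∈ s},
    (Matrix.of fun a b : {x // x ∈ s} => Real.exp (-dist (a : X) (b : X)))⁻¹ a b

/-- The magnitude of a compact positive definite metric space, as the supremum (in
`[0,∞]`) of the magnitudes of its finite nonempty subsets. -/
noncomputable def magE {X : Type*} [MetricSpace X] (A : Set X) : ℝ≥0∞ :=
  ⨆ (s : Finset X) (_ : s.Nonempty ∧ ↑s ⊆ A), ENNReal.ofReal (finMag s)

/-!
Finitely supported `ν : X →₀ ℝ` serve as discrete signed measures. Pushing the weight measure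
`μ` forward along a simple function `π` with `d(π x, x) < δ` gives such a `ν` with total mass
`μ(X)`, total variation at most `‖μ‖`, and potential `∫ exp (-d(a,b)) dν(b)` uniformly within
`δ ‖μ‖` of `1`. Write `⟨·,·⟩` for the positive semidefinite form `∫∫ exp (-d) dν dρ` and `w_B`
for the weighting of a finite `B`, so that `|B| = ⟨w_B, w_B⟩`. Then
`0 ≤ ⟨w_B - ν, w_B - ν⟩ ≈ |B| - 2|B| + μ(X)` gives `|B| ≤ μ(X)`, while Cauchy–Schwarz
`μ(X)² = ⟨ν, w_T⟩² ≤ ⟨ν, ν⟩ |T| ≈ μ(X) |T|` for any finite `T ⊇ supp ν` gives the reverse bound.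
-/

namespace Magnitude

section Discrete

variable {X : Type*}

noncomputable def mass (ν : X →₀ ℝ) : ℝ := ν.sum fun _ c => c

noncomputable def totalVariation (ν : X →₀ ℝ) : ℝ := ν.sum fun _ c => |c|

lemma totalVariation_nonneg (ν : X →₀ ℝ) : 0 ≤ totalVariation ν :=
  Finset.sum_nonneg fun _ _ => abs_nonneg _

variable [MeasurableSpace X]

lemma integral_comp_simpleFunc {Y : Type*} (μ : Measure X) [IsFiniteMeasure μ]
    (π : SimpleFunc X Y) (g : Y → ℝ) :
    ∫ x, g (π x) ∂μ = ∑ y ∈ π.range, μ.real (π ⁻¹' {y}) * g y := by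
  classical
  have hfib : (fun x => g (π x)) =
      fun x => ∑ y ∈ π.range, (π ⁻¹' {y}).indicator (fun _ => g y) x := by
    ext x
    refine Eq.symm ((Finset.sum_eq_single_of_mem (π x) (π.mem_range_self x)
      fun y _ hy => Set.indicator_of_notMem (Ne.symm hy) _).trans ?_)
    exact Set.indicator_of_mem rfl _
  rw [hfib, integral_finsetSum _ fun y _ =>
    (integrable_const (g y)).indicator (π.measurableSet_fiber y)]
  simp [integral_indicator_const _ (π.measurableSet_fiber _)]

lemma sum_measureReal_fiber {Y : Type*} (μ : Measure X) [IsFiniteMeasure μ]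
    (π : SimpleFunc X Y) : ∑ y ∈ π.range, μ.real (π ⁻¹' {y}) = μ.real Set.univ := by
  rw [sum_measureReal_preimage_singleton _ fun y _ => π.measurableSet_fiber y,
    SimpleFunc.coe_range, Set.preimage_range]

/-- The signed measure `π_* μp - π_* μn`. -/
noncomputable def discretize (π : SimpleFunc X X) (μp μn : Measure X) : X →₀ ℝ :=
  Finsupp.onFinset π.range (fun y => μp.real (π ⁻¹' {y}) - μn.real (π ⁻¹' {y})) fun y hy => by
    by_contra h
    rw [Set.preimage_singleton_eq_empty.mpr (mt π.mem_range.mpr h)] at hy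
    simp at hy

variable (π : SimpleFunc X X) (μp μn : Measure X) [IsFiniteMeasure μp] [IsFiniteMeasure μn]

lemma mass_discretize : mass (discretize π μp μn) = μp.real Set.univ - μn.real Set.univ := by
  rw [mass, discretize, Finsupp.onFinset_sum _ fun _ => rfl, Finset.sum_sub_distrib,
    sum_measureReal_fiber, sum_measureReal_fiber]

lemma totalVariation_discretize_le :
    totalVariation (discretize π μp μn) ≤ μp.real Set.univ + μn.real Set.univ := by
  rw [totalVariation, discretize, Finsupp.onFinset_sum _ fun _ => abs_zero,
    ← sum_measureReal_fiber μp π, ← sum_measureReal_fiber μn π, ← Finset.sum_add_distrib]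
  refine Finset.sum_le_sum fun y _ => (abs_sub _ _).trans_eq ?_
  rw [abs_of_nonneg measureReal_nonneg, abs_of_nonneg measureReal_nonneg]

end Discrete

lemma abs_exp_neg_sub_exp_neg_le {u v : ℝ} (hu : 0 ≤ u) (hv : 0 ≤ v) :
    |Real.exp (-u) - Real.exp (-v)| ≤ |u - v| := by
  wlog huv : u ≤ v generalizing u v
  · rw [abs_sub_comm, abs_sub_comm u]
    exact this hv hu (le_of_not_ge huv)
  have hsplit : Real.exp (-v) = Real.exp (-u) * Real.exp (-(v - u)) := by
    rw [← Real.exp_add]; ring_nf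
  have h1 := Real.add_one_le_exp (-(v - u))
  have h2 : Real.exp (-(v - u)) ≤ 1 := Real.exp_le_one_iff.mpr (by linarith)
  have h3 : Real.exp (-u) ≤ 1 := Real.exp_le_one_iff.mpr (by linarith)
  rw [abs_of_nonneg (by rw [hsplit]; nlinarith [Real.exp_pos (-u)]), abs_of_nonpos (by linarith),
    hsplit]
  nlinarith [Real.exp_pos (-u)]

lemma div_add_one_mul_le {ε C : ℝ} (hε : 0 ≤ ε) (hC : 0 ≤ C) : ε / (C + 1) * C ≤ ε := by
  rw [div_mul_eq_mul_div, div_le_iff₀ (by positivity)]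
  nlinarith

variable {X : Type*} [MetricSpace X]

lemma abs_exp_neg_dist_sub_le (a y x : X) :
    |Real.exp (-dist a y) - Real.exp (-dist a x)| ≤ dist y x := by
  refine (abs_exp_neg_sub_exp_neg_le dist_nonneg dist_nonneg).trans ?_
  simpa only [dist_comm a] using abs_dist_sub_le y x a

noncomputable abbrev simMatrix (s : Finset X) : Matrix s s ℝ :=
  Matrix.of fun a b : {x // x ∈ s} => Real.exp (-dist (a : X) (b : X))

noncomputable def potential : (X →₀ ℝ) →ₗ[ℝ] X → ℝ :=
  Finsupp.linearCombination ℝ fun x a => Real.exp (-dist a x)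

lemma potential_apply (ν : X →₀ ℝ) (a : X) :
    potential ν a = ν.sum fun x c => c * Real.exp (-dist a x) := by
  simp [potential, Finsupp.linearCombination_apply, Finsupp.sum, Finset.sum_apply]

noncomputable def simForm : LinearMap.BilinForm ℝ (X →₀ ℝ) :=
  LinearMap.mk₂ ℝ (fun ν ρ => ν.sum fun a c => c * potential ρ a)
    (fun _ _ _ => Finsupp.sum_add_index' (fun _ => zero_mul _) fun _ _ _ => add_mul _ _ _)
    (fun r ν ρ => by
      rw [Finsupp.sum_smul_index fun _ => zero_mul _, smul_eq_mul, Finsupp.mul_sum]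
      simp only [mul_assoc])
    (fun ν ρ₁ ρ₂ => by simp only [map_add, Pi.add_apply, mul_add, Finsupp.sum_add])
    (fun r ν ρ => by
      simp only [map_smul, Pi.smul_apply, smul_eq_mul, Finsupp.mul_sum, mul_left_comm r])

lemma simForm_apply (ν ρ : X →₀ ℝ) : simForm ν ρ = ν.sum fun a c => c * potential ρ a := rfl

lemma simForm_comm (ν ρ : X →₀ ℝ) : simForm ν ρ = simForm ρ ν := by
  simp only [simForm_apply, potential_apply, Finsupp.mul_sum]
  rw [Finsupp.sum_comm]
  refine Finsupp.sum_congr fun b _ => Finsupp.sum_congr fun a _ => ?_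
  rw [dist_comm]
  ring

lemma potential_eq_mulVec {s : Finset X} {ρ : X →₀ ℝ} (hρ : ρ.support ⊆ s) (a : s) :
    potential ρ a = (simMatrix s *ᵥ fun b => ρ b) a := by
  rw [potential_apply, Finsupp.sum_of_support_subset ρ hρ _ (by simp), ← Finset.sum_coe_sort s]
  simp [Matrix.mulVec, dotProduct, mul_comm]

lemma simForm_eq_dotProduct {s : Finset X} {ν ρ : X →₀ ℝ} (hν : ν.support ⊆ s)
    (hρ : ρ.support ⊆ s) :
    simForm ν ρ = (fun a : s => ν a) ⬝ᵥ (simMatrix s *ᵥ fun b => ρ b) := by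
  rw [simForm_apply, Finsupp.sum_of_support_subset ν hν _ (by simp), ← Finset.sum_coe_sort s]
  simp only [dotProduct, potential_eq_mulVec hρ]

lemma simForm_self_pos (hPD : ∀ s : Finset X, s.Nonempty → (simMatrix s).PosDef)
    {ν : X →₀ ℝ} (hν : ν ≠ 0) : 0 < simForm ν ν := by
  have hs : ν.support.Nonempty := Finsupp.support_nonempty_iff.mpr hν
  have hv : (fun a : ν.support => ν a) ≠ 0 := fun h => by
    obtain ⟨a, ha⟩ := hs
    exact Finsupp.mem_support_iff.mp ha (congrFun h ⟨a, ha⟩)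
  simpa [simForm_eq_dotProduct subset_rfl subset_rfl] using (hPD _ hs).dotProduct_mulVec_pos hv

lemma simForm_self_nonneg (hPD : ∀ s : Finset X, s.Nonempty → (simMatrix s).PosDef)
    (ν : X →₀ ℝ) : 0 ≤ simForm ν ν := by
  rcases eq_or_ne ν 0 with rfl | hν
  · simp
  · exact (simForm_self_pos hPD hν).le

lemma simForm_eq_mass {ν ρ : X →₀ ℝ} (h : ∀ a ∈ ν.support, potential ρ a = 1) :
    simForm ν ρ = mass ν := by
  rw [simForm_apply, mass]
  exact Finsupp.sum_congr fun a ha => by rw [h a ha, mul_one]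

lemma abs_simForm_sub_mass_le {ν ρ : X →₀ ℝ} {η : ℝ}
    (h : ∀ a ∈ ν.support, |potential ρ a - 1| ≤ η) :
    |simForm ν ρ - mass ν| ≤ η * totalVariation ν := by
  have hdiff : simForm ν ρ - mass ν = ν.sum fun a c => c * (potential ρ a - 1) := by
    simp only [simForm_apply, mass, ← Finsupp.sum_sub, mul_sub, mul_one]
  rw [hdiff, totalVariation, Finsupp.mul_sum]
  refine (Finset.abs_sum_le_sum_abs _ _).trans (Finset.sum_le_sum fun a ha => ?_)
  dsimp only
  rw [abs_mul, mul_comm η]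
  exact mul_le_mul_of_nonneg_left (h a ha) (abs_nonneg _)

/-- Built with `Classical.decEq X`, the instance inside `finMag`, so that the two inverses agree. -/
noncomputable def weighting (s : Finset X) : X →₀ ℝ :=
  letI : DecidableEq X := Classical.decEq X
  Finsupp.onFinset s (fun a => if h : a ∈ s then ((simMatrix s)⁻¹ *ᵥ 1) ⟨a, h⟩ else 0)
    fun _ ha => by_contra fun h => ha (dif_neg h)

lemma weighting_support_subset (s : Finset X) : (weighting s).support ⊆ s :=
  Finsupp.support_onFinset_subset

lemma potential_weighting {s : Finset X} (hs : (simMatrix s).PosDef) {a : X} (ha : a ∈ s) :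
    potential (weighting s) a = 1 := by
  let _ : DecidableEq X := Classical.decEq X
  have hw : (fun b : s => weighting s b) = (simMatrix s)⁻¹ *ᵥ 1 := by
    ext b
    simp [weighting]
  rw [potential_eq_mulVec (weighting_support_subset s) ⟨a, ha⟩, hw, Matrix.mulVec_mulVec,
    Matrix.mul_nonsing_inv _ hs.det_pos.ne'.isUnit, Matrix.one_mulVec, Pi.one_apply]

lemma mass_weighting (s : Finset X) : mass (weighting s) = finMag s := by
  let _ : DecidableEq X := Classical.decEq X
  rw [mass, weighting, Finsupp.onFinset_sum _ fun _ => rfl, ← Finset.sum_coe_sort s]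
  simp [finMag, Matrix.mulVec, dotProduct]

lemma finMag_eq_simForm_weighting {s : Finset X} (hs : (simMatrix s).PosDef) :
    finMag s = simForm (weighting s) (weighting s) := by
  rw [simForm_eq_mass fun a ha => potential_weighting hs (weighting_support_subset s ha),
    mass_weighting]

lemma finMag_pos (hPD : ∀ s : Finset X, s.Nonempty → (simMatrix s).PosDef) {s : Finset X}
    (hs : s.Nonempty) : 0 < finMag s := by
  obtain ⟨a, ha⟩ := hs
  have hw : weighting s ≠ 0 := fun h => by
    simpa [h] using potential_weighting (hPD s ⟨a, ha⟩) ha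
  rw [finMag_eq_simForm_weighting (hPD s ⟨a, ha⟩)]
  exact simForm_self_pos hPD hw

lemma ofReal_finMag_le_magE {s : Finset X} {A : Set X} (hs : s.Nonempty) (hA : ↑s ⊆ A) :
    ENNReal.ofReal (finMag s) ≤ magE A :=
  le_iSup₂_of_le (f := fun (s : Finset X) (_ : s.Nonempty ∧ ↑s ⊆ A) => ENNReal.ofReal (finMag s))
    s ⟨hs, hA⟩ le_rfl

def IsApproxWeighting (ν : X →₀ ℝ) (M L η : ℝ) : Prop :=
  mass ν = M ∧ totalVariation ν ≤ L ∧ ∀ a, |potential ν a - 1| ≤ η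

lemma IsApproxWeighting.simForm_self_le {ν : X →₀ ℝ} {M L η : ℝ}
    (hν : IsApproxWeighting ν M L η) (hη : 0 ≤ η) : simForm ν ν ≤ M + η * |L| := by
  obtain ⟨hνM, hνL, hν1⟩ := hν
  have hTV : η * totalVariation ν ≤ η * |L| :=
    mul_le_mul_of_nonneg_left (hνL.trans (le_abs_self L)) hη
  linarith [(abs_le.mp (abs_simForm_sub_mass_le (ν := ν) (ρ := ν) fun a _ => hν1 a)).2]

theorem finMag_le_of_isApproxWeighting
    (hPD : ∀ s : Finset X, s.Nonempty → (simMatrix s).PosDef) {M L : ℝ}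
    (happrox : ∀ η > 0, ∃ ν : X →₀ ℝ, IsApproxWeighting ν M L η)
    {s : Finset X} (hs : s.Nonempty) : finMag s ≤ M := by
  set w := weighting s
  set C := 2 * totalVariation w + |L|
  have hC : 0 ≤ C := by have := totalVariation_nonneg w; positivity
  refine le_of_forall_pos_le_add fun ε hε => ?_
  obtain ⟨ν, hν⟩ := happrox (ε / (C + 1)) (by positivity)
  have hwν : |simForm w ν - finMag s| ≤ ε / (C + 1) * totalVariation w := by
    rw [← mass_weighting]
    exact abs_simForm_sub_mass_le fun a _ => hν.2.2 a
  have hνν := hν.simForm_self_le (by positivity)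
  have hnonneg : 0 ≤ simForm w w - 2 * simForm w ν + simForm ν ν := by
    have := simForm_self_nonneg hPD (w - ν)
    simp only [map_sub, LinearMap.sub_apply, simForm_comm ν w] at this
    linarith
  rw [← finMag_eq_simForm_weighting (hPD s hs)] at hnonneg
  linarith [(abs_le.mp hwν).1, div_add_one_mul_le hε.le hC]

theorem exists_finMag_ge_of_isApproxWeighting [Nonempty X]
    (hPD : ∀ s : Finset X, s.Nonempty → (simMatrix s).PosDef) {M L : ℝ}
    (happrox : ∀ η > 0, ∃ ν : X →₀ ℝ, IsApproxWeighting ν M L η) {ε : ℝ} (hε : 0 < ε) :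
    ∃ s : Finset X, s.Nonempty ∧ M - ε ≤ finMag s := by
  classical
  obtain ⟨ν, hν⟩ := happrox (ε / (|L| + 1)) (by positivity)
  set s := insert (Classical.arbitrary X) ν.support
  have hs : s.Nonempty := Finset.insert_nonempty _ _
  set w := weighting s
  set m := finMag s
  have hm : 0 < m := finMag_pos hPD hs
  have hww : simForm w w = m := (finMag_eq_simForm_weighting (hPD s hs)).symm
  have hνw : simForm ν w = M := (simForm_eq_mass fun a ha =>
    potential_weighting (hPD s hs) (Finset.mem_insert_of_mem ha)).trans hν.1
  have hνν : simForm ν ν ≤ M + ε := (hν.simForm_self_le (by positivity)).trans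
    (by linarith [div_add_one_mul_le hε.le (abs_nonneg L)])
  -- Cauchy–Schwarz: `0 ≤ ⟨m ν - M w, m ν - M w⟩ = m (m ⟨ν, ν⟩ - M²)`.
  have hCS : M ^ 2 ≤ m * simForm ν ν := by
    have := simForm_self_nonneg hPD (m • ν - M • w)
    simp only [map_sub, map_smul, LinearMap.sub_apply, LinearMap.smul_apply, smul_eq_mul,
      simForm_comm w ν, hνw, hww] at this
    nlinarith
  refine ⟨s, hs, ?_⟩
  rcases le_or_gt M ε with hMε | hMε
  · linarith
  · nlinarith [mul_le_mul_of_nonneg_left hνν hm.le]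

theorem magE_univ_eq_ofReal [Nonempty X]
    (hPD : ∀ s : Finset X, s.Nonempty → (simMatrix s).PosDef) {M L : ℝ}
    (happrox : ∀ η > 0, ∃ ν : X →₀ ℝ, IsApproxWeighting ν M L η) :
    magE (Set.univ : Set X) = ENNReal.ofReal M := by
  refine le_antisymm (iSup₂_le fun s hs =>
    ENNReal.ofReal_le_ofReal (finMag_le_of_isApproxWeighting hPD happrox hs.1)) ?_
  refine ENNReal.le_of_forall_pos_le_add fun ε hε _ => ?_
  obtain ⟨s, hs, hsM⟩ := exists_finMag_ge_of_isApproxWeighting hPD happrox (NNReal.coe_pos.2 hε)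
  calc ENNReal.ofReal M ≤ ENNReal.ofReal (finMag s) + ENNReal.ofReal ε :=
        (ENNReal.ofReal_le_ofReal (by linarith)).trans ENNReal.ofReal_add_le
    _ ≤ magE Set.univ + ε := by
        rw [ENNReal.ofReal_coe_nnreal]
        exact add_le_add_left (ofReal_finMag_le_magE hs (Set.subset_univ _)) _

section Discretization

variable [MeasurableSpace X]

lemma exists_simpleFunc_dist_lt [CompactSpace X] [Nonempty X] [OpensMeasurableSpace X] {δ : ℝ}
    (hδ : 0 < δ) : ∃ π : SimpleFunc X X, ∀ x, dist (π x) x < δ := by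
  set e := TopologicalSpace.denseSeq X
  obtain ⟨t, ht⟩ := isCompact_univ.elim_finite_subcover (fun k => Metric.ball (e k) δ)
    (fun _ => Metric.isOpen_ball) fun x _ => by
      obtain ⟨k, hk⟩ := (TopologicalSpace.denseRange_denseSeq X).exists_dist_lt x hδ
      exact Set.mem_iUnion.mpr ⟨k, hk⟩
  refine ⟨SimpleFunc.nearestPt e (t.sup id), fun x => ?_⟩
  obtain ⟨k, hk, hxk⟩ := Set.mem_iUnion₂.mp (ht (Set.mem_univ x))
  have := SimpleFunc.edist_nearestPt_le e x (Finset.le_sup (f := id) hk)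
  rw [edist_dist, edist_dist] at this
  exact (ENNReal.ofReal_le_ofReal_iff dist_nonneg).mp this |>.trans_lt
    (by rwa [Metric.mem_ball, dist_comm] at hxk)

lemma abs_integral_comp_sub_integral_le [OpensMeasurableSpace X] (μ : Measure X)
    [IsFiniteMeasure μ] {π : SimpleFunc X X} {δ : ℝ} (hπ : ∀ x, dist (π x) x ≤ δ) (a : X) :
    |∫ x, Real.exp (-dist a (π x)) ∂μ - ∫ x, Real.exp (-dist a x) ∂μ| ≤ δ * μ.real Set.univ := by
  have hint : ∀ f : X → X, Measurable f → Integrable (fun x => Real.exp (-dist a (f x))) μ :=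
    fun f hf => Integrable.of_bound
      ((by fun_prop : Continuous fun y => Real.exp (-dist a y)).measurable.comp
        hf).aestronglyMeasurable
      1 (ae_of_all _ fun x => by
        rw [Real.norm_eq_abs, Real.abs_exp, Real.exp_le_one_iff, neg_nonpos]
        exact dist_nonneg)
  rw [← integral_sub (hint π π.measurable) (hint (fun x => x) measurable_id')]
  exact norm_integral_le_of_norm_le_const (ae_of_all _ fun x =>
    (Real.norm_eq_abs _).trans_le ((abs_exp_neg_dist_sub_le a (π x) x).trans (hπ x)))

lemma potential_discretize (π : SimpleFunc X X) (μp μn : Measure X) [IsFiniteMeasure μp]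
    [IsFiniteMeasure μn] (a : X) :
    potential (discretize π μp μn) a =
      ∫ x, Real.exp (-dist a (π x)) ∂μp - ∫ x, Real.exp (-dist a (π x)) ∂μn := by
  rw [potential_apply, discretize, Finsupp.onFinset_sum _ fun _ => zero_mul _,
    integral_comp_simpleFunc μp π fun y => Real.exp (-dist a y),
    integral_comp_simpleFunc μn π fun y => Real.exp (-dist a y), ← Finset.sum_sub_distrib]
  simp only [sub_mul]

theorem exists_isApproxWeighting_discretize [CompactSpace X] [Nonempty X] [BorelSpace X]
    (μp μn : Measure X) [IsFiniteMeasure μp] [IsFiniteMeasure μn]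
    (hweight : ∀ a : X,
      (∫ b, Real.exp (-dist a b) ∂μp) - (∫ b, Real.exp (-dist a b) ∂μn) = 1)
    {η : ℝ} (hη : 0 < η) : ∃ ν : X →₀ ℝ, IsApproxWeighting ν
      (μp.real Set.univ - μn.real Set.univ) (μp.real Set.univ + μn.real Set.univ) η := by
  set C := μp.real Set.univ + μn.real Set.univ
  have hC : 0 ≤ C := by positivity
  obtain ⟨π, hπ⟩ := exists_simpleFunc_dist_lt (X := X) (δ := η / (C + 1)) (by positivity)
  refine ⟨discretize π μp μn, mass_discretize π μp μn, totalVariation_discretize_le π μp μn,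
    fun a => ?_⟩
  have hp := abs_integral_comp_sub_integral_le μp (fun x => (hπ x).le) a
  have hn := abs_integral_comp_sub_integral_le μn (fun x => (hπ x).le) a
  rw [potential_discretize, ← hweight a]
  calc _ = |(∫ x, Real.exp (-dist a (π x)) ∂μp - ∫ x, Real.exp (-dist a x) ∂μp) -
        (∫ x, Real.exp (-dist a (π x)) ∂μn - ∫ x, Real.exp (-dist a x) ∂μn)| := by ring_nf
    _ ≤ η := (abs_sub _ _).trans (by linarith [div_add_one_mul_le hη.le hC])

end Discretization

end Magnitude

/-- If a nonempty compact positive definite metric space `X` possesses a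
weight measure (a finite signed Borel measure `μ = μp - μn` satisfying
`∫ exp (-d(a,b)) dμ(b) = 1` for all `a`), then its magnitude is finite and equals the
total mass `μ(X)`. -/
theorem stmt_7 {X : Type*} [MetricSpace X] [CompactSpace X] [Nonempty X]
    [MeasurableSpace X] [BorelSpace X]
    (hPD : ∀ s : Finset X, s.Nonempty →
      (Matrix.of fun a b : {x // x ∈ s} => Real.exp (-dist (a : X) (b : X))).PosDef)
    (μp μn : Measure X) [IsFiniteMeasure μp] [IsFiniteMeasure μn]
    (hweight : ∀ a : X,
      (∫ b, Real.exp (-dist a b) ∂μp) - (∫ b, Real.exp (-dist a b) ∂μn) = 1) :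
    magE (Set.univ : Set X) ≠ ∞ ∧
    magE (Set.univ : Set X) =
      ENNReal.ofReal ((μp Set.univ).toReal - (μn Set.univ).toReal) := by
  have hmag := Magnitude.magE_univ_eq_ofReal hPD fun _ =>
    Magnitude.exists_isApproxWeighting_discretize μp μn hweight
  exact ⟨hmag ▸ ENNReal.ofReal_ne_top, hmag⟩
end

section
/- Let a ≤ b be real numbers, and let μ be the signed (in fact positive) Borel measure on ℝ given by μ = (1/2)(δ_a + λ|_{[a,b]} + δ_b), where δ_x is the Dirac measure at x and λ|_{[a,b]} is Lebesgue measure restricted to [a,b]. Then ∫ exp(-|x − y|) dμ(y) = 1 for every x ∈ [a,b], i.e., μ is a weight measure on the interval [a,b] with the Euclidean metric, and consequently the magnitude of [a,b] equals μ(ℝ) = 1 + (b − a)/2. -/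
open Matrix BigOperators MeasureTheory
open scoped ENNReal

/-- The magnitude of a compact positive definite metric space, as the supremum of the
magnitudes of its finite nonempty subsets. -/
noncomputable def mag {X : Type*} [MetricSpace X] (A : Set X) : ℝ :=
  sSup {m : ℝ | ∃ s : Finset X, s.Nonempty ∧ ↑s ⊆ A ∧ m = finMag s}

/-!
For `x₀ < ⋯ < xₙ` the similarity matrix `Z = [exp (-|xᵢ - xⱼ|)]` factors as `L D Lᵀ`, where
`L` is unit lower triangular with `Lᵢⱼ = exp (xⱼ - xᵢ)` for `j ≤ i`, and `D = diag (1 - qⱼ²)`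
with `qⱼ = exp (xⱼ₋₁ - xⱼ)`, `q₀ = 0`. Since `L (1 - q) = 1`, the sum of the entries of `Z⁻¹`
is `∑ (1 - qⱼ)² / (1 - qⱼ²) = 1 + ∑ tanh ((xⱼ - xⱼ₋₁) / 2)`. As `tanh t ≤ t`, no finite subset
of `[a, b]` has magnitude above `1 + (b - a) / 2`, and as `t / (1 + t) ≤ tanh t`, uniform grids
approach this bound. The weight equation is a direct computation of `∫ exp (-|x - y|)`.
-/

open Real Finset

namespace Real

lemma hasDerivAt_tanh (x : ℝ) : HasDerivAt tanh (1 / cosh x ^ 2) x := by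
  have h := (hasDerivAt_sinh x).div (hasDerivAt_cosh x) (cosh_pos x).ne'
  rw [show sinh / cosh = tanh from funext fun y => (tanh_eq_sinh_div_cosh y).symm] at h
  refine h.congr_deriv ?_
  rw [← cosh_sq_sub_sinh_sq x]
  ring

lemma tanh_le_self {x : ℝ} (hx : 0 ≤ x) : tanh x ≤ x := by
  have hderiv (y : ℝ) := (hasDerivAt_id y).sub (hasDerivAt_tanh y)
  have hmono : Monotone (id - tanh) := by
    refine monotone_of_deriv_nonneg (fun y => (hderiv y).differentiableAt) fun y => ?_
    rw [(hderiv y).deriv, sub_nonneg]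
    exact div_le_one_of_le₀ (one_le_pow₀ (one_le_cosh y)) (by positivity)
  simpa using hmono hx

lemma tanh_half_eq (t : ℝ) : tanh (t / 2) = (1 - exp (-t)) / (1 + exp (-t)) := by
  have h : exp (-t) = exp (-(t / 2)) * exp (-(t / 2)) := by rw [← exp_add]; ring_nf
  rw [tanh_eq, h, exp_neg]
  have := exp_pos (t / 2)
  field_simp

lemma div_one_add_le_tanh {x : ℝ} (hx : 0 ≤ x) : x / (1 + x) ≤ tanh x := by
  have hq : (1 + 2 * x) * exp (-(2 * x)) ≤ 1 := by
    calc (1 + 2 * x) * exp (-(2 * x)) ≤ exp (2 * x) * exp (-(2 * x)) := by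
          gcongr; linarith [add_one_le_exp (2 * x)]
      _ = 1 := by rw [← exp_add]; simp
  rw [show x = 2 * x / 2 by ring, tanh_half_eq, div_le_div_iff₀ (by positivity) (by positivity)]
  nlinarith [exp_pos (-(2 * x))]

end Real

theorem Matrix.sum_inv_ldl {ι K : Type*} [Fintype ι] [DecidableEq ι] [Field K]
    (L : Matrix ι ι K) (d u : ι → K) (hL : IsUnit L.det) (hd : ∀ i, d i ≠ 0)
    (hu : L *ᵥ u = 1) :
    ∑ i, ∑ j, (L * diagonal d * Lᵀ)⁻¹ i j = ∑ i, u i ^ 2 / d i := by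
  have hLinv : L⁻¹ *ᵥ 1 = u := by
    rw [← hu, mulVec_mulVec, nonsing_inv_mul L hL, one_mulVec]
  have hdinv : (diagonal d)⁻¹ = diagonal d⁻¹ := by
    refine inv_eq_left_inv ?_
    rw [diagonal_mul_diagonal, ← diagonal_one]
    exact congrArg diagonal (funext fun i => inv_mul_cancel₀ (hd i))
  calc ∑ i, ∑ j, (L * diagonal d * Lᵀ)⁻¹ i j
      = 1 ⬝ᵥ ((L * diagonal d * Lᵀ)⁻¹ *ᵥ 1) := by
        simp [mulVec, dotProduct]
    _ = u ⬝ᵥ (diagonal d⁻¹ *ᵥ u) := by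
        rw [mul_inv_rev, mul_inv_rev, ← mulVec_mulVec, dotProduct_mulVec,
          ← transpose_nonsing_inv, vecMul_transpose, hLinv, ← mulVec_mulVec, hLinv, hdinv]
    _ = ∑ i, u i ^ 2 / d i := by
        simp only [dotProduct, mulVec_diagonal, Pi.inv_apply]
        exact sum_congr rfl fun i _ => by ring

lemma sum_range_sub_pred (F : ℕ → ℝ) (i : ℕ) :
    ∑ j ∈ range (i + 1), (F j - if j = 0 then 0 else F (j - 1)) = F i := by
  induction i with
  | zero => simp
  | succ i ih => rw [sum_range_succ, ih]; simp

lemma Fin.sum_ite_le_eq_sum_range {n : ℕ} (i : Fin (n + 1)) (f : ℕ → ℝ) :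
    ∑ j : Fin (n + 1), (if j ≤ i then f j else 0) = ∑ m ∈ range (i + 1), f m := by
  rw [← sum_filter, show univ.filter (· ≤ i) = Iic i by ext; simp, Nat.range_succ_eq_Iic,
    ← Fin.map_valEmbedding_Iic, sum_map]
  rfl

theorem finMag_eq_of_equiv {X ι : Type*} [MetricSpace X] [Fintype ι] [DecidableEq ι]
    {s : Finset X} (e : ι ≃ s) :
    finMag s = ∑ i, ∑ j, (of fun i j : ι => exp (-dist (e i : X) (e j)))⁻¹ i j := by
  classical
  have hsub : (of fun a b : s => exp (-dist (a : X) b)) =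
      (of fun i j : ι => exp (-dist (e i : X) (e j))).submatrix e.symm e.symm := by
    ext; simp
  rw [finMag, hsub, inv_submatrix_equiv]
  exact Fintype.sum_equiv e.symm _ _ fun a => Fintype.sum_equiv e.symm _ _ fun b => rfl

theorem Finset.exists_strictMonoOn_image_range_eq {α : Type*} [LinearOrder α] (s : Finset α)
    (hs : s.Nonempty) :
    ∃ (n : ℕ) (x : ℕ → α), StrictMonoOn x (Set.Iic n) ∧ (range (n + 1)).image x = s := by
  obtain ⟨n, hn⟩ : ∃ n, #s = n + 1 := ⟨#s - 1, by have := hs.card_pos; omega⟩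
  set f := s.orderEmbOfFin hn
  refine ⟨n, fun m => f ⟨min m n, Nat.lt_succ_of_le (min_le_right m n)⟩, ?_, ?_⟩
  · intro i hi j hj hij
    apply f.strictMono
    simpa [Fin.lt_def, min_eq_left (Set.mem_Iic.1 hi), min_eq_left (Set.mem_Iic.1 hj)] using hij
  · ext y
    simp only [mem_image, mem_range]
    constructor
    · rintro ⟨m, -, rfl⟩
      exact s.orderEmbOfFin_mem hn _
    · intro hy
      obtain ⟨i, rfl⟩ : y ∈ Set.range f := by rwa [s.range_orderEmbOfFin hn]
      exact ⟨i, i.2, by simp [min_eq_left (Nat.lt_succ_iff.1 i.2)]⟩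

section PointsOnLine

variable (n : ℕ) (x : ℕ → ℝ)

noncomputable def expGap (m : ℕ) : ℝ := if m = 0 then 0 else exp (x (m - 1) - x m)

noncomputable def expDistMatrix : Matrix (Fin (n + 1)) (Fin (n + 1)) ℝ :=
  of fun i j => exp (-|x i - x j|)

noncomputable def expLowerMatrix : Matrix (Fin (n + 1)) (Fin (n + 1)) ℝ :=
  of fun i j => if j ≤ i then exp (x j - x i) else 0

variable {n x}

lemma exp_mul_expGap (m : ℕ) :
    exp (x m) * expGap x m = if m = 0 then 0 else exp (x (m - 1)) := by
  unfold expGap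
  split_ifs
  · simp
  · rw [← exp_add]; ring_nf

lemma expLowerMatrix_mulVec : expLowerMatrix n x *ᵥ (1 - expGap x ∘ Fin.val) = 1 := by
  funext i
  have hterm (j : Fin (n + 1)) : expLowerMatrix n x i j * (1 - expGap x j) = exp (-x i) *
      if j ≤ i then exp (x j) - (if (j : ℕ) = 0 then 0 else exp (x (j - 1))) else 0 := by
    simp only [expLowerMatrix, of_apply, ← exp_mul_expGap]
    split_ifs
    · rw [sub_eq_add_neg, exp_add]; ring
    · simp
  simp only [mulVec, dotProduct, Pi.sub_apply, Function.comp_apply, Pi.one_apply, hterm,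
    ← mul_sum,
    Fin.sum_ite_le_eq_sum_range i fun m => exp (x m) - if m = 0 then 0 else exp (x (m - 1)),
    sum_range_sub_pred, ← exp_add, neg_add_cancel, exp_zero]

lemma sum_expLowerMatrix_mul_mul_of_le {i k : Fin (n + 1)} (hik : i ≤ k) :
    ∑ j, expLowerMatrix n x i j * (1 - expGap x j ^ 2) * expLowerMatrix n x k j =
      exp (x i - x k) := by
  have hterm (j : Fin (n + 1)) :
      expLowerMatrix n x i j * (1 - expGap x j ^ 2) * expLowerMatrix n x k j =
      exp (-x i - x k) * if j ≤ i then exp (x j) ^ 2 - (exp (x j) * expGap x j) ^ 2 else 0 := by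
    simp only [expLowerMatrix, of_apply]
    split_ifs with hji hjk
    · simp only [sub_eq_add_neg, exp_add, exp_neg]
      field_simp
    · exact absurd (hji.trans hik) hjk
    all_goals simp
  simp only [hterm, ← mul_sum, exp_mul_expGap, apply_ite (· ^ 2), zero_pow two_ne_zero]
  rw [Fin.sum_ite_le_eq_sum_range i
      (fun m => exp (x m) ^ 2 - if m = 0 then 0 else exp (x (m - 1)) ^ 2),
    sum_range_sub_pred, sq, ← exp_add, ← exp_add]
  ring_nf

lemma expLowerMatrix_ldl (hx : MonotoneOn x (Set.Iic n)) :
    expLowerMatrix n x * diagonal (fun j : Fin (n + 1) => 1 - expGap x j ^ 2) *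
      (expLowerMatrix n x)ᵀ = expDistMatrix n x := by
  have hle {i k : Fin (n + 1)} (hik : i ≤ k) : x i ≤ x k :=
    hx (Set.mem_Iic.2 (Nat.lt_succ_iff.1 i.2)) (Set.mem_Iic.2 (Nat.lt_succ_iff.1 k.2)) hik
  ext i k
  rw [mul_apply]
  simp only [mul_diagonal, transpose_apply, expDistMatrix, of_apply]
  rcases le_total i k with hik | hki
  · rw [sum_expLowerMatrix_mul_mul_of_le hik, abs_of_nonpos (sub_nonpos.2 (hle hik)), neg_neg]
  · rw [abs_of_nonneg (sub_nonneg.2 (hle hki)), neg_sub, ← sum_expLowerMatrix_mul_mul_of_le hki]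
    exact sum_congr rfl fun j _ => by ring

lemma det_expLowerMatrix : (expLowerMatrix n x).det = 1 := by
  have hlower : (expLowerMatrix n x).IsLowerTriangular := fun i j (hij : i < j) =>
    if_neg (not_le.2 hij)
  rw [det_of_isLowerTriangular _ hlower]
  simp [expLowerMatrix]

lemma expGap_sq_lt_one (hx : StrictMonoOn x (Set.Iic n)) {m : ℕ} (hm : m ≤ n) :
    expGap x m ^ 2 < 1 := by
  unfold expGap
  split_ifs with h0
  · norm_num
  · have : x (m - 1) < x m := hx (Set.mem_Iic.2 (by omega)) (Set.mem_Iic.2 hm) (by omega)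
    rw [← exp_nat_mul, exp_lt_one_iff]
    push_cast
    linarith

lemma one_sub_sq_div_one_sub_sq (q : ℝ) :
    (1 - q) ^ 2 / (1 - q ^ 2) = (1 - q) / (1 + q) := by
  rcases eq_or_ne (1 - q) 0 with h | h
  · simp [show q = 1 by linarith]
  · rw [show 1 - q ^ 2 = (1 - q) * (1 + q) by ring, sq, mul_div_mul_left _ _ h]

theorem sum_inv_expDistMatrix (hx : StrictMonoOn x (Set.Iic n)) :
    ∑ i, ∑ j, (expDistMatrix n x)⁻¹ i j =
      1 + ∑ k ∈ range n, tanh ((x (k + 1) - x k) / 2) := by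
  rw [← expLowerMatrix_ldl hx.monotoneOn, sum_inv_ldl _ _ _ (by simp [det_expLowerMatrix])
    (fun j => (sub_pos.2 (expGap_sq_lt_one hx (Nat.lt_succ_iff.1 j.2))).ne')
    expLowerMatrix_mulVec, Fin.sum_univ_succ, ← Fin.sum_univ_eq_sum_range]
  simp only [Pi.sub_apply, Pi.one_apply, Function.comp_apply, Fin.val_zero, Fin.val_succ]
  congr 1
  · simp [expGap]
  · refine sum_congr rfl fun k _ => ?_
    rw [one_sub_sq_div_one_sub_sq, tanh_half_eq]
    simp [expGap]

theorem finMag_image_range (hx : StrictMonoOn x (Set.Iic n)) :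
    finMag ((range (n + 1)).image x) = 1 + ∑ k ∈ range n, tanh ((x (k + 1) - x k) / 2) := by
  have hmem (i : Fin (n + 1)) : x i ∈ (range (n + 1)).image x :=
    mem_image_of_mem x (mem_range.2 i.2)
  let e : Fin (n + 1) ≃ (range (n + 1)).image x :=
    Equiv.ofBijective (fun i => ⟨x i, hmem i⟩) <| by
    refine ⟨fun i j hij => Fin.ext (hx.injOn ?_ ?_ (congrArg Subtype.val hij)), ?_⟩
    · exact Set.mem_Iic.2 (Nat.lt_succ_iff.1 i.2)
    · exact Set.mem_Iic.2 (Nat.lt_succ_iff.1 j.2)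
    · rintro ⟨y, hy⟩
      obtain ⟨m, hm, rfl⟩ := mem_image.1 hy
      exact ⟨⟨m, mem_range.1 hm⟩, rfl⟩
  rw [finMag_eq_of_equiv e, ← sum_inv_expDistMatrix hx]
  rfl

end PointsOnLine

theorem finMag_le_of_subset_Icc {a b : ℝ} {s : Finset ℝ} (hs : s.Nonempty)
    (hsub : ↑s ⊆ Set.Icc a b) : finMag s ≤ 1 + (b - a) / 2 := by
  obtain ⟨n, x, hx, rfl⟩ := s.exists_strictMonoOn_image_range_eq hs
  have hmem {m : ℕ} (hm : m ≤ n) : x m ∈ Set.Icc a b :=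
    hsub (mem_coe.2 (mem_image_of_mem x (mem_range.2 (Nat.lt_succ_of_le hm))))
  rw [finMag_image_range hx]
  calc 1 + ∑ k ∈ range n, tanh ((x (k + 1) - x k) / 2)
      ≤ 1 + ∑ k ∈ range n, (x (k + 1) - x k) / 2 := by
        gcongr with k hk
        refine tanh_le_self (div_nonneg (sub_nonneg.2 (hx.monotoneOn ?_ ?_ k.le_succ)) two_pos.le)
        · exact Set.mem_Iic.2 (mem_range.1 hk).le
        · exact Set.mem_Iic.2 (mem_range.1 hk)
    _ = 1 + (x n - x 0) / 2 := by rw [← sum_div, sum_range_sub]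
    _ ≤ 1 + (b - a) / 2 := by linarith [(hmem le_rfl).2, (hmem n.zero_le).1]

theorem exists_le_finMag_of_lt {a b : ℝ} (hab : a < b) (n : ℕ) :
    ∃ s : Finset ℝ, s.Nonempty ∧ ↑s ⊆ Set.Icc a b ∧
      1 + (b - a) / 2 / (1 + (b - a) / 2 * (1 / (n + 1))) ≤ finMag s := by
  set h := (b - a) / (n + 1) with hh
  have hpos : 0 < h := div_pos (sub_pos.2 hab) n.cast_add_one_pos
  have hbh : (n + 1) * h = b - a := by rw [hh]; field_simp
  set x : ℕ → ℝ := fun m => a + m * h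
  have hx : StrictMono x := fun i j hij => by simp only [x]; gcongr
  refine ⟨(range (n + 2)).image x, by simp, ?_, ?_⟩
  · intro y hy
    obtain ⟨m, hm, rfl⟩ := mem_image.1 (mem_coe.1 hy)
    have hm' : (m : ℝ) ≤ n + 1 := by exact_mod_cast Nat.lt_succ_iff.1 (mem_range.1 hm)
    constructor <;> nlinarith [m.cast_nonneg (α := ℝ)]
  · rw [finMag_image_range (hx.strictMonoOn _)]
    have hgap (k : ℕ) : tanh ((x (k + 1) - x k) / 2) = tanh (h / 2) := by
      simp only [x]; push_cast; ring_nf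
    simp only [hgap, sum_const, card_range, nsmul_eq_mul]
    gcongr 1 + ?_
    calc (b - a) / 2 / (1 + (b - a) / 2 * (1 / (n + 1)))
        = (n + 1) * (h / 2 / (1 + h / 2)) := by rw [← hbh]; field_simp
      _ ≤ _ := by push_cast; gcongr; exact div_one_add_le_tanh (by positivity)

theorem finMag_singleton {X : Type*} [MetricSpace X] (p : X) : finMag {p} = 1 := by
  rw [finMag_eq_of_equiv (Equiv.ofUnique Unit ({p} : Finset X))]
  simp

theorem mag_Icc {a b : ℝ} (hab : a ≤ b) : mag (Set.Icc a b) = 1 + (b - a) / 2 := by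
  set T := {m : ℝ | ∃ s : Finset ℝ, s.Nonempty ∧ ↑s ⊆ Set.Icc a b ∧ m = finMag s}
  have hle : ∀ m ∈ T, m ≤ 1 + (b - a) / 2 := by
    rintro _ ⟨s, hs, hsub, rfl⟩
    exact finMag_le_of_subset_Icc hs hsub
  have hbdd : BddAbove T := ⟨_, hle⟩
  have hone : (1 : ℝ) ∈ T :=
    ⟨{a}, singleton_nonempty a, by simp [hab], (finMag_singleton a).symm⟩
  change sSup T = _
  refine le_antisymm (csSup_le ⟨1, hone⟩ hle) ?_
  rcases hab.eq_or_lt with rfl | hlt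
  · simpa using le_csSup hbdd hone
  · have hlim : Filter.Tendsto
        (fun n : ℕ => 1 + (b - a) / 2 / (1 + (b - a) / 2 * (1 / (n + 1))))
        Filter.atTop (nhds (1 + (b - a) / 2)) := by
      have := (tendsto_one_div_add_atTop_nhds_zero_nat.const_mul ((b - a) / 2)).const_add 1
      simpa using ((tendsto_const_nhds (x := (b - a) / 2)).div this (by simp)).const_add 1
    refine le_of_tendsto' hlim fun n => ?_
    obtain ⟨s, hs, hsub, hge⟩ := exists_le_finMag_of_lt hlt n
    exact hge.trans (le_csSup hbdd ⟨s, hs, hsub, rfl⟩)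

theorem integral_exp_neg_abs_sub_Icc {a b x : ℝ} (hx : x ∈ Set.Icc a b) :
    ∫ y in Set.Icc a b, exp (-|x - y|) = 2 - exp (a - x) - exp (x - b) := by
  have hcont : Continuous fun y => exp (-|x - y|) := by fun_prop
  have hleft : ∫ y in a..x, exp (-|x - y|) = ∫ y in a..x, exp (y - x) :=
    intervalIntegral.integral_congr fun y hy => by
      rw [Set.uIcc_of_le hx.1] at hy
      rw [abs_of_nonneg (sub_nonneg.2 hy.2), neg_sub]
  have hright : ∫ y in x..b, exp (-|x - y|) = ∫ y in x..b, exp (x - y) :=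
    intervalIntegral.integral_congr fun y hy => by
      rw [Set.uIcc_of_le hx.2] at hy
      rw [abs_of_nonpos (sub_nonpos.2 hy.1), neg_neg]
  rw [integral_Icc_eq_integral_Ioc, ← intervalIntegral.integral_of_le (hx.1.trans hx.2),
    ← intervalIntegral.integral_add_adjacent_intervals (hcont.intervalIntegrable a x)
      (hcont.intervalIntegrable x b), hleft, hright, intervalIntegral.integral_comp_sub_right,
    intervalIntegral.integral_comp_sub_left, integral_exp, integral_exp]
  simp only [sub_self, exp_zero]
  ring

noncomputable def intervalWeightMeasure (a b : ℝ) : Measure ℝ :=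
  ((1 : ℝ≥0∞) / 2) • (Measure.dirac a + volume.restrict (Set.Icc a b) + Measure.dirac b)

theorem integral_exp_neg_abs_sub_intervalWeightMeasure {a b x : ℝ} (hx : x ∈ Set.Icc a b) :
    ∫ y, exp (-|x - y|) ∂intervalWeightMeasure a b = 1 := by
  have hint {ν : Measure ℝ} [IsFiniteMeasure ν] : Integrable (fun y => exp (-|x - y|)) ν :=
    Integrable.of_bound (by fun_prop) 1 (ae_of_all _ fun y => by simp)
  rw [intervalWeightMeasure, integral_smul_measure, integral_add_measure hint hint,
    integral_add_measure hint hint, integral_dirac, integral_dirac,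
    integral_exp_neg_abs_sub_Icc hx, abs_of_nonneg (sub_nonneg.2 hx.1),
    abs_of_nonpos (sub_nonpos.2 hx.2)]
  simp only [one_div, ENNReal.toReal_inv, ENNReal.toReal_ofNat, neg_sub, smul_eq_mul]
  ring

theorem intervalWeightMeasure_univ {a b : ℝ} (hab : a ≤ b) :
    (intervalWeightMeasure a b Set.univ).toReal = 1 + (b - a) / 2 := by
  rw [intervalWeightMeasure, Measure.smul_apply, Measure.add_apply, Measure.add_apply,
    Measure.restrict_apply_univ, measure_univ, measure_univ, Real.volume_Icc, smul_eq_mul,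
    ENNReal.toReal_mul, ENNReal.toReal_add (by finiteness) (by finiteness),
    ENNReal.toReal_add (by finiteness) (by finiteness), ENNReal.toReal_ofReal (sub_nonneg.2 hab)]
  norm_num
  ring

/-- The measure `μ = ½(δ_a + λ|_{[a,b]} + δ_b)` is a weight measure on
the interval `[a,b] ⊆ ℝ`, and consequently the magnitude of `[a,b]` equals
`μ(ℝ) = 1 + (b - a)/2`. -/
theorem stmt_9 (a b : ℝ) (hab : a ≤ b) (μ : Measure ℝ)
    (hμ : μ = ((1 : ℝ≥0∞) / 2) •
      (Measure.dirac a + volume.restrict (Set.Icc a b) + Measure.dirac b)) :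
    (∀ x ∈ Set.Icc a b, ∫ y, Real.exp (-|x - y|) ∂μ = 1) ∧
    mag (Set.Icc a b) = (μ Set.univ).toReal ∧
    (μ Set.univ).toReal = 1 + (b - a) / 2 := by
  subst hμ
  exact ⟨fun x hx => integral_exp_neg_abs_sub_intervalWeightMeasure hx,
    (mag_Icc hab).trans (intervalWeightMeasure_univ hab).symm, intervalWeightMeasure_univ hab⟩
end

section
/- Let (A,d) be a nonempty compact homogeneous metric space (its isometry group acts transitively on points), and let μ be an isometry-invariant Borel probability measure on A. Then the function a ↦ ∫_A exp(-d(a,b)) dμ(b) is constant on A, with constant value C = ∫_A ∫_A exp(-d(a,b)) dμ(a) dμ(b) > 0, and the measure C⁻¹·μ is a weight measure on A: ∫_A exp(-d(a,b)) d(C⁻¹μ)(b) = 1 for every a ∈ A. In particular A possesses a weight measure of total mass C⁻¹, so its magnitude is |A| = (∫_A ∫_A exp(-d(a,b)) dμ(a) dμ(b))⁻¹. -/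
open MeasureTheory
open scoped ENNReal

/-- Let `X` be a nonempty compact homogeneous metric space and `μ` an
isometry-invariant Borel probability measure on `X`. Then `a ↦ ∫ exp (-d(a,b)) dμ(b)`
is constant, with value `C = ∫∫ exp (-d(a,b)) dμ dμ > 0`; the rescaled measure
`C⁻¹ μ` is a weight measure on `X`, and its total mass — the magnitude of `X` — is
`C⁻¹`. -/
theorem stmt_10 {X : Type*} [MetricSpace X] [CompactSpace X] [Nonempty X]
    [MeasurableSpace X] [BorelSpace X]
    (hHom : ∀ a b : X, ∃ f : X ≃ᵢ X, f a = b)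
    (μ : Measure X) [IsProbabilityMeasure μ]
    (hInv : ∀ f : X ≃ᵢ X, Measure.map f μ = μ)
    (C : ℝ) (hC : C = ∫ a, ∫ b, Real.exp (-dist a b) ∂μ ∂μ) :
    (∀ a : X, ∫ b, Real.exp (-dist a b) ∂μ = C) ∧
    0 < C ∧
    (∀ a : X, ∫ b, Real.exp (-dist a b) ∂((ENNReal.ofReal C)⁻¹ • μ) = 1) ∧
    (((ENNReal.ofReal C)⁻¹ • μ) Set.univ).toReal = C⁻¹ := by
  have hcont : ∀ a : X, Continuous fun b : X => Real.exp (-dist a b) := fun a =>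
    Real.continuous_exp.comp ((continuous_const.dist continuous_id).neg)
  have hint : ∀ a : X, Integrable (fun b : X => Real.exp (-dist a b)) μ := fun a =>
    (hcont a).integrable_of_hasCompactSupport (HasCompactSupport.of_compactSpace _)
  -- constancy
  have hconst : ∀ a a' : X,
      (∫ b, Real.exp (-dist a b) ∂μ) = ∫ b, Real.exp (-dist a' b) ∂μ := by
    intro a a'
    obtain ⟨f, hf⟩ := hHom a a'
    have e := f.toHomeomorph.toMeasurableEquiv
    calc (∫ b, Real.exp (-dist a b) ∂μ)
        = ∫ b, Real.exp (-dist (f a) (f b)) ∂μ := by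
          simp [f.isometry.dist_eq]
      _ = ∫ b, Real.exp (-dist a' (f b)) ∂μ := by rw [hf]
      _ = ∫ b, Real.exp (-dist a' b) ∂(Measure.map f.toHomeomorph.toMeasurableEquiv μ) := by
          rw [MeasureTheory.integral_map_equiv]; rfl
      _ = ∫ b, Real.exp (-dist a' b) ∂μ := by
          have : Measure.map f.toHomeomorph.toMeasurableEquiv μ = Measure.map f μ := rfl
          rw [this, hInv]
  obtain ⟨a₀⟩ := ‹Nonempty X›
  have hFa : ∀ a : X, ∫ b, Real.exp (-dist a b) ∂μ = C := by
    have : C = ∫ b, Real.exp (-dist a₀ b) ∂μ := by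
      rw [hC]
      have : ∀ a : X, (∫ b, Real.exp (-dist a b) ∂μ) = ∫ b, Real.exp (-dist a₀ b) ∂μ :=
        fun a => hconst a a₀
      rw [integral_congr_ae (Filter.Eventually.of_forall this), integral_const]
      simp
    intro a; rw [hconst a a₀, ← this]
  -- positivity
  have hD : ∀ a b : X, Real.exp (-(Metric.diam (Set.univ : Set X))) ≤ Real.exp (-dist a b) := by
    intro a b
    exact Real.exp_le_exp.mpr (neg_le_neg
      (Metric.dist_le_diam_of_mem isCompact_univ.isBounded trivial trivial))
  have hCpos : 0 < C := by
    have h1 : Real.exp (-(Metric.diam (Set.univ : Set X))) ≤ C := by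
      rw [← hFa a₀]
      calc Real.exp (-(Metric.diam (Set.univ : Set X)))
          = ∫ _b, Real.exp (-(Metric.diam (Set.univ : Set X))) ∂μ := by simp
        _ ≤ ∫ b, Real.exp (-dist a₀ b) ∂μ :=
            integral_mono (integrable_const _) (hint a₀) (fun b => hD a₀ b)
    exact lt_of_lt_of_le (Real.exp_pos _) h1
  have htoReal : ((ENNReal.ofReal C)⁻¹).toReal = C⁻¹ := by
    rw [ENNReal.toReal_inv, ENNReal.toReal_ofReal hCpos.le]
  refine ⟨hFa, hCpos, ?_, ?_⟩
  · intro a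
    rw [integral_smul_measure, hFa a, htoReal, smul_eq_mul, inv_mul_cancel₀ hCpos.ne']
  · simp [Measure.smul_apply, htoReal]
end

section
/- Let a₁ < a₂ < … < a_N be real numbers (N ≥ 1) and let A = {a₁, …, a_N} with the metric d(x,y) = |x − y|. Then the vector w ∈ ℝ^A given by w_{a_i} = (1/2)(tanh((a_i − a_{i−1})/2) + tanh((a_{i+1} − a_i)/2)) for 2 ≤ i ≤ N−1, w_{a_1} = (1/2)(1 + tanh((a_2 − a_1)/2)), and w_{a_N} = (1/2)(1 + tanh((a_N − a_{N−1})/2)), is a weighting on A, and the magnitude of A equals 1 + ∑_{i=2}^{N} tanh((a_i − a_{i−1})/2). -/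
/-
Write `w i = (l i + r i)/2` with `l i`, `r i` the left and right half-gap tanh terms (`1` at an
endpoint). Since `e^{-d} (1 + tanh (d/2)) = 1 - tanh (d/2)`, an induction along the sorted points
gives `∑_{i ≤ j} e^{-(a j - a i)} w i = (1 + r j)/2` and
`∑_{i ≥ j} e^{-(a i - a j)} w i = (1 + l j)/2`; these overlap in `w j`, so row `j` of `Z w`
is `1`. Summing the weights counts every interior half-gap term twice.
-/

theorem Real.exp_neg_mul_one_add_tanh_half (d : ℝ) :
    Real.exp (-d) * (1 + Real.tanh (d / 2)) = 1 - Real.tanh (d / 2) := by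
  have hcosh : Real.cosh (d / 2) ≠ 0 := (Real.cosh_pos _).ne'
  rw [Real.tanh_eq_sinh_div_cosh]
  field_simp
  rw [Real.cosh_add_sinh, Real.cosh_sub_sinh, ← Real.exp_add]
  ring_nf

namespace TanhWeighting

variable (N : ℕ) (a : ℕ → ℝ)

noncomputable def leftTanh (i : ℕ) : ℝ :=
  if i = 0 then 1 else Real.tanh ((a i - a (i - 1)) / 2)

noncomputable def rightTanh (i : ℕ) : ℝ :=
  if i = N - 1 then 1 else Real.tanh ((a (i + 1) - a i) / 2)

noncomputable def weight (i : ℕ) : ℝ :=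
  (1 / 2) * (leftTanh a i + rightTanh N a i)

theorem sum_range_exp_mul_weight {j : ℕ} (hj : j < N) :
    ∑ i ∈ Finset.range (j + 1), Real.exp (a i - a j) * weight N a i
      = (1 / 2) * (1 + rightTanh N a j) := by
  induction j with
  | zero => simp [weight, leftTanh]
  | succ j ih =>
    have hscale : ∀ i, Real.exp (a i - a (j + 1))
        = Real.exp (-(a (j + 1) - a j)) * Real.exp (a i - a j) := fun i => by
      rw [← Real.exp_add]; ring_nf
    rw [Finset.sum_range_succ, Finset.sum_congr rfl fun i _ => by rw [hscale, mul_assoc],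
      ← Finset.mul_sum, ih (by omega)]
    simp only [weight, leftTanh, rightTanh, sub_self, Real.exp_zero, one_mul,
      add_tsub_cancel_right, if_neg (show j ≠ N - 1 by omega), Nat.add_one_ne_zero, if_false]
    linear_combination (1 / 2) * Real.exp_neg_mul_one_add_tanh_half (a (j + 1) - a j)

theorem sum_Ico_exp_mul_weight {j : ℕ} (hj : j < N) :
    ∑ i ∈ Finset.Ico j N, Real.exp (a j - a i) * weight N a i
      = (1 / 2) * (1 + leftTanh a j) := by
  have hN : 0 < N := by omega
  replace hj : j ≤ N - 1 := by omega
  induction hj using Nat.decreasingInduction with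
  | self =>
    rw [Nat.Ico_pred_singleton hN, Finset.sum_singleton, sub_self, Real.exp_zero, one_mul, weight,
      rightTanh, if_pos rfl, add_comm]
  | of_succ k hk ih =>
    have hscale : ∀ i, Real.exp (a k - a i)
        = Real.exp (-(a (k + 1) - a k)) * Real.exp (a (k + 1) - a i) := fun i => by
      rw [← Real.exp_add]; ring_nf
    rw [Finset.sum_eq_sum_Ico_succ_bot (by omega),
      Finset.sum_congr rfl fun i _ => by rw [hscale, mul_assoc], ← Finset.mul_sum, ih]
    simp only [weight, leftTanh, rightTanh, sub_self, Real.exp_zero, one_mul,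
      add_tsub_cancel_right, if_neg (show k ≠ N - 1 by omega), Nat.add_one_ne_zero, if_false]
    linear_combination (1 / 2) * Real.exp_neg_mul_one_add_tanh_half (a (k + 1) - a k)

theorem sum_range_exp_neg_abs_mul_weight (hmono : MonotoneOn a (Set.Iio N)) {j : ℕ}
    (hj : j < N) :
    ∑ i ∈ Finset.range N, Real.exp (-|a j - a i|) * weight N a i = 1 := by
  have hL := sum_range_exp_mul_weight N a hj
  have hR := sum_Ico_exp_mul_weight N a hj
  rw [Finset.sum_range_succ, sub_self, Real.exp_zero, one_mul] at hL
  have hbelow : ∀ i ∈ Finset.range j, Real.exp (-|a j - a i|) = Real.exp (a i - a j) := by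
    intro i hi
    have hij : i < j := Finset.mem_range.1 hi
    rw [abs_of_nonneg (sub_nonneg.2 (hmono (hij.trans hj) hj hij.le)), neg_sub]
  have habove : ∀ i ∈ Finset.Ico j N, Real.exp (-|a j - a i|) = Real.exp (a j - a i) := by
    intro i hi
    obtain ⟨hji, hiN⟩ := Finset.mem_Ico.1 hi
    rw [abs_of_nonpos (sub_nonpos.2 (hmono hj hiN hji)), neg_neg]
  have hwj : weight N a j = (1 / 2) * (leftTanh a j + rightTanh N a j) := rfl
  rw [← Finset.sum_range_add_sum_Ico _ hj.le,
    Finset.sum_congr rfl fun i hi => congrArg (· * weight N a i) (hbelow i hi),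
    Finset.sum_congr rfl fun i hi => congrArg (· * weight N a i) (habove i hi)]
  linear_combination hL + hR - hwj

theorem sum_range_leftTanh (M : ℕ) :
    ∑ i ∈ Finset.range (M + 1), leftTanh a i
      = 1 + ∑ i ∈ Finset.range M, Real.tanh ((a (i + 1) - a i) / 2) := by
  simp [Finset.sum_range_succ', leftTanh, add_comm]

theorem sum_range_rightTanh (M : ℕ) :
    ∑ i ∈ Finset.range (M + 1), rightTanh (M + 1) a i
      = 1 + ∑ i ∈ Finset.range M, Real.tanh ((a (i + 1) - a i) / 2) := by
  rw [Finset.sum_range_succ, add_comm]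
  congr 1
  · simp [rightTanh]
  · exact Finset.sum_congr rfl fun i hi => by simp [rightTanh, (Finset.mem_range.1 hi).ne]

theorem sum_range_weight (hN : 0 < N) :
    ∑ i ∈ Finset.range N, weight N a i
      = 1 + ∑ i ∈ Finset.range N, if i = 0 then 0 else Real.tanh ((a i - a (i - 1)) / 2) := by
  obtain ⟨M, rfl⟩ : ∃ M, N = M + 1 := ⟨N - 1, by omega⟩
  have hgaps : ∑ i ∈ Finset.range (M + 1),
      (if i = 0 then 0 else Real.tanh ((a i - a (i - 1)) / 2))
        = ∑ i ∈ Finset.range M, Real.tanh ((a (i + 1) - a i) / 2) := by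
    simp [Finset.sum_range_succ']
  simp only [weight]
  rw [hgaps, ← Finset.mul_sum, Finset.sum_add_distrib, sum_range_leftTanh, sum_range_rightTanh]
  ring

end TanhWeighting

open TanhWeighting in
/-- For real numbers `a 0 < a 1 < ⋯ < a (N-1)` (`N ≥ 1`), viewed as a
finite subspace of `ℝ`, the explicit vector `w` built from hyperbolic tangents of
half-gaps is a weighting (`Z w = 𝟙` for the similarity matrix
`Z i j = exp (-|a i - a j|)`), and the magnitude equals
`1 + ∑_{i=2}^{N} tanh ((a_i - a_{i-1})/2)`. -/
theorem stmt_11 (N : ℕ) (hN : 1 ≤ N) (a : ℕ → ℝ)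
    (ha : ∀ i j : ℕ, i < j → j < N → a i < a j)
    (w : Fin N → ℝ)
    (hw : w = fun i : Fin N =>
      (1 / 2) *
        ((if (i : ℕ) = 0 then 1 else Real.tanh ((a i - a ((i : ℕ) - 1)) / 2)) +
         (if (i : ℕ) = N - 1 then 1 else Real.tanh ((a ((i : ℕ) + 1) - a i) / 2)))) :
    ((Matrix.of fun i j : Fin N => Real.exp (-|a i - a j|)).mulVec w = fun _ => 1) ∧
    (∑ i : Fin N, w i =
      1 + ∑ i : Fin N,
        if (i : ℕ) = 0 then 0 else Real.tanh ((a i - a ((i : ℕ) - 1)) / 2)) := by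
  have hmono : MonotoneOn a (Set.Iio N) :=
    StrictMonoOn.monotoneOn fun i _ j hj hij => ha i j hij hj
  obtain rfl : w = fun i : Fin N => weight N a i := hw
  refine ⟨funext fun j => ?_, ?_⟩
  · exact (Fin.sum_univ_eq_sum_range (fun i => Real.exp (-|a j - a i|) * weight N a i) N).trans
      (sum_range_exp_neg_abs_mul_weight N a hmono j.isLt)
  · rw [Fin.sum_univ_eq_sum_range (weight N a),
      Fin.sum_univ_eq_sum_range (fun i => if i = 0 then 0 else Real.tanh ((a i - a (i - 1)) / 2))]
    exact sum_range_weight N a hN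
end

section
/- Let (A,d) be a nonempty compact metric space, and suppose the Minkowski dimension of A exists, i.e., lim_{ε→0⁺} log N(A,ε) / log(1/ε) = D, where N(A,ε) is the minimal number of closed ε-balls needed to cover A. Then lim_{t→∞} log(|tA|₊) / log t = D, where |tA|₊ denotes the maximum diversity of A with the metric t·d. -/
open MeasureTheory Filter Topology

/-- The maximum diversity of the compact metric space `X` with its metric scaled by
`t`: the supremum over Borel probability measures `μ` of
`(∫∫ exp (-t d(a,b)) dμ dμ)⁻¹`. -/
noncomputable def maxDiv (X : Type*) [MetricSpace X] [MeasurableSpace X] (t : ℝ) : ℝ :=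
  sSup {r : ℝ | ∃ μ : Measure X, IsProbabilityMeasure μ ∧
    r = (∫ a, ∫ b, Real.exp (-(t * dist a b)) ∂μ ∂μ)⁻¹}

/-!
For a probability measure `μ` and a cover of `X` by `n` closed `ε`-balls, refine the cover to a
measurable partition into pieces `P i` of diameter `≤ 2ε`; then
`∫∫ exp (-t d) dμ dμ ≥ exp (-2tε) ∑ μ(P i)² ≥ exp (-2tε) / n` by Cauchy–Schwarz, so
`|tX|₊ ≤ N(ε) exp (2tε)`, and `ε = 1/t` gives the upper bound. Conversely, a maximal `δ`-separated
set is a `δ`-cover, so it has at least `N(δ)` points, and the uniform measure on it has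
`∫∫ exp (-t d) ≤ 1/N(δ) + exp (-tδ)`. With `δ = (log t)² / t` the second term is at most the first
for large `t` while `log (1/δ) ~ log t`, which gives the lower bound.
-/

open Set Metric Function
open scoped ENNReal NNReal

namespace MeasureTheory

variable {X ι : Type*} [MeasurableSpace X] [Fintype ι]

theorem exists_measurable_partition_subset {B : ι → Set X} (hB : ∀ i, MeasurableSet (B i)) :
    ∃ P : ι → Set X, (∀ i, MeasurableSet (P i)) ∧ Pairwise (Disjoint on P) ∧
      (∀ i, P i ⊆ B i) ∧ ⋃ i, P i = ⋃ i, B i := by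
  let e := Fintype.equivFin ι
  let B' : Fin (Fintype.card ι) → Set X := B ∘ e.symm
  refine ⟨disjointed B' ∘ e, fun i => disjointedRec (fun _ j ht => ht.diff (hB _)) (hB _),
    fun i j hij => disjoint_disjointed B' (e.injective.ne hij),
    fun i => by simpa [B'] using disjointed_le B' (e i), ?_⟩
  change ⋃ i, disjointed B' (e i) = _
  rw [e.surjective.iUnion_comp (disjointed B'), iUnion_disjointed]
  exact e.symm.surjective.iUnion_comp B

theorem one_le_card_mul_sum_measureReal_sq (μ : Measure X) [IsProbabilityMeasure μ]
    {P : ι → Set X} (hPm : ∀ i, MeasurableSet (P i)) (hPd : Pairwise (Disjoint on P))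
    (hP : ⋃ i, P i = univ) :
    1 ≤ Fintype.card ι * ∑ i, μ.real (P i) ^ 2 := by
  have hsum : ∑ i, μ.real (P i) = 1 := by
    rw [← measureReal_iUnion_fintype hPd hPm, hP, probReal_univ]
  simpa [hsum] using sq_sum_le_card_mul_sum_sq (s := Finset.univ) (f := fun i => μ.real (P i))

theorem mul_sum_measureReal_sq_le_integral_prod {μ : Measure X} [IsFiniteMeasure μ]
    {K : X × X → ℝ} (hK : Integrable K (μ.prod μ)) (hK0 : 0 ≤ K)
    {P : ι → Set X} (hPm : ∀ i, MeasurableSet (P i)) (hPd : Pairwise (Disjoint on P))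
    {c : ℝ} (hc : ∀ i, ∀ a ∈ P i, ∀ b ∈ P i, c ≤ K (a, b)) :
    c * ∑ i, μ.real (P i) ^ 2 ≤ ∫ p, K p ∂μ.prod μ := by
  have hSm : ∀ i, MeasurableSet (P i ×ˢ P i) := fun i => (hPm i).prod (hPm i)
  have hSd : Pairwise (Disjoint on fun i => P i ×ˢ P i) := fun _ _ hij =>
    disjoint_prod.2 (.inl (hPd hij))
  calc c * ∑ i, μ.real (P i) ^ 2
      = ∑ i, c * (μ.prod μ).real (P i ×ˢ P i) := by
        simp [Finset.mul_sum, measureReal_prod_prod, sq]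
    _ ≤ ∑ i, ∫ p in P i ×ˢ P i, K p ∂μ.prod μ := by
        gcongr with i
        exact setIntegral_ge_of_const_le_real (hSm i) (measure_ne_top _ _)
          (fun p hp => hc i p.1 hp.1 p.2 hp.2) hK.integrableOn
    _ = ∫ p in ⋃ i, P i ×ˢ P i, K p ∂μ.prod μ :=
        (integral_iUnion_fintype hSm hSd fun _ => hK.integrableOn).symm
    _ ≤ ∫ p, K p ∂μ.prod μ := setIntegral_le_integral hK (.of_forall hK0)

end MeasureTheory

namespace Finset

theorem nonempty_of_univ_subset_biUnion {α β : Type*} [Nonempty β] {s : Finset α}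
    {f : α → Set β} (h : Set.univ ⊆ ⋃ x ∈ s, f x) : s.Nonempty := by
  obtain ⟨x, hx, -⟩ := mem_iUnion₂.1 (h (Set.mem_univ (Classical.arbitrary β)))
  exact ⟨x, hx⟩

variable {α : Type*} [MeasurableSpace α]

noncomputable def uniformMeasure (s : Finset α) : Measure α :=
  Measure.sum fun x : s => (s.card : ℝ≥0∞)⁻¹ • Measure.dirac (x : α)

theorem isProbabilityMeasure_uniformMeasure {s : Finset α} (hs : s.Nonempty) :
    IsProbabilityMeasure s.uniformMeasure := by
  constructor
  simp [uniformMeasure, ENNReal.mul_inv_cancel, hs.card_pos.ne']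

theorem integral_uniformMeasure [MeasurableSingletonClass α] (s : Finset α) (f : α → ℝ) :
    ∫ x, f x ∂s.uniformMeasure = (s.card : ℝ)⁻¹ * ∑ x ∈ s, f x := by
  rw [uniformMeasure, integral_sum_dirac fun x =>
      ENNReal.inv_ne_top.2 (by exact_mod_cast (Finset.card_pos.2 ⟨x.1, x.2⟩).ne'),
    tsum_fintype, Finset.sum_coe_sort s (fun x => ((s.card : ℝ≥0∞)⁻¹).toReal • f x),
    ← smul_eq_mul, Finset.smul_sum]
  simp

end Finset

theorem exists_finset_pairwise_lt_dist_cover {X : Type*} [MetricSpace X] [CompactSpace X]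
    {δ : ℝ} (hδ : 0 < δ) :
    ∃ s : Finset X, (s : Set X).Pairwise (fun x y => δ < dist x y) ∧
      univ ⊆ ⋃ x ∈ s, closedBall x δ := by
  lift δ to ℝ≥0 using hδ.le
  obtain ⟨C, -, hCfin, hC⟩ := exists_finite_isCover_of_isCompact (ε := δ / 2)
    (by simpa using hδ.ne') (isCompact_univ (X := X))
  have hpack : packingNumber δ (univ : Set X) ≠ ⊤ := by
    refine ne_top_of_le_ne_top (encard_ne_top_iff.2 hCfin) ?_
    simpa [mul_div_cancel₀] using
      (packingNumber_two_mul_le_externalCoveringNumber (δ / 2) univ).trans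
        hC.externalCoveringNumber_le_encard
  have hfin : (maximalSeparatedSet δ (univ : Set X)).Finite := by
    rw [← encard_ne_top_iff, encard_maximalSeparatedSet hpack]
    exact hpack
  refine ⟨hfin.toFinset, ?_, ?_⟩
  · intro x hx y hy hxy
    have : (δ : ℝ≥0∞) < edist x y := isSeparated_maximalSeparatedSet (ε := δ) (A := univ)
      (by simpa using hx) (by simpa using hy) hxy
    rw [edist_dist, ← ENNReal.ofReal_coe_nnreal] at this
    exact (ENNReal.ofReal_lt_ofReal_iff_of_nonneg δ.2).1 this
  · simpa [isCover_iff_subset_iUnion_closedBall] using isCover_maximalSeparatedSet hpack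

section MaxDiv

variable {X : Type*} [MetricSpace X] [MeasurableSpace X] [BorelSpace X]

theorem integrable_exp_neg_mul_dist [SecondCountableTopology X] {t : ℝ} (ht : 0 ≤ t)
    (ν : Measure (X × X)) [IsFiniteMeasure ν] :
    Integrable (fun p : X × X => Real.exp (-(t * dist p.1 p.2))) ν :=
  .of_bound (by fun_prop) 1 <| .of_forall fun p => by
    rw [Real.norm_of_nonneg (Real.exp_nonneg _), Real.exp_le_one_iff, neg_nonpos]
    positivity

theorem exp_neg_two_mul_le_card_mul_integral [SecondCountableTopology X] {t ε : ℝ}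
    (ht : 0 ≤ t) (μ : Measure X) [IsProbabilityMeasure μ] {s : Finset X}
    (hs : univ ⊆ ⋃ x ∈ s, closedBall x ε) :
    Real.exp (-(2 * t * ε)) ≤ s.card * ∫ a, ∫ b, Real.exp (-(t * dist a b)) ∂μ ∂μ := by
  obtain ⟨P, hPm, hPd, hPB, hPU⟩ := exists_measurable_partition_subset
    (B := fun x : s => closedBall (x : X) ε) fun _ => measurableSet_closedBall
  have hP : ⋃ x, P x = univ := by
    refine hPU.trans (eq_univ_of_forall fun a => ?_)
    obtain ⟨x, hx, ha⟩ := mem_iUnion₂.1 (hs (mem_univ a))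
    exact mem_iUnion.2 ⟨⟨x, hx⟩, ha⟩
  have hc : ∀ x, ∀ a ∈ P x, ∀ b ∈ P x,
      Real.exp (-(2 * t * ε)) ≤ Real.exp (-(t * dist a b)) := by
    intro x a ha b hb
    have hab : dist a b ≤ 2 * ε := by
      linarith [dist_triangle_right a b x, mem_closedBall.1 (hPB x ha),
        mem_closedBall.1 (hPB x hb)]
    rw [Real.exp_le_exp]
    nlinarith
  have hK := integrable_exp_neg_mul_dist ht (μ.prod μ)
  rw [integral_integral hK]
  calc Real.exp (-(2 * t * ε))
      ≤ Real.exp (-(2 * t * ε)) * (s.card * ∑ x : s, μ.real (P x) ^ 2) := by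
        have h1 := one_le_card_mul_sum_measureReal_sq μ hPm hPd hP
        rw [Fintype.card_coe] at h1
        exact le_mul_of_one_le_right (Real.exp_nonneg _) h1
    _ = s.card * (Real.exp (-(2 * t * ε)) * ∑ x : s, μ.real (P x) ^ 2) := by ring
    _ ≤ s.card * ∫ p, Real.exp (-(t * dist p.1 p.2)) ∂μ.prod μ := by
        gcongr
        exact mul_sum_measureReal_sq_le_integral_prod hK (fun _ => (Real.exp_pos _).le) hPm hPd
          hc

theorem inv_integral_le_card_mul_exp [SecondCountableTopology X] {t ε : ℝ} (ht : 0 ≤ t)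
    (μ : Measure X) [IsProbabilityMeasure μ] {s : Finset X}
    (hs : univ ⊆ ⋃ x ∈ s, closedBall x ε) :
    (∫ a, ∫ b, Real.exp (-(t * dist a b)) ∂μ ∂μ)⁻¹ ≤ s.card * Real.exp (2 * t * ε) := by
  have h := exp_neg_two_mul_le_card_mul_integral ht μ hs
  have hI : 0 < ∫ a, ∫ b, Real.exp (-(t * dist a b)) ∂μ ∂μ :=
    pos_of_mul_pos_right ((Real.exp_pos _).trans_le h) (Nat.cast_nonneg _)
  rw [inv_le_iff_one_le_mul₀ hI]
  calc 1 = Real.exp (2 * t * ε) * Real.exp (-(2 * t * ε)) := by rw [← Real.exp_add]; simp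
    _ ≤ Real.exp (2 * t * ε) * (s.card * ∫ a, ∫ b, Real.exp (-(t * dist a b)) ∂μ ∂μ) := by
        gcongr
    _ = _ := by ring

theorem maxDiv_le_card_mul_exp [Nonempty X] [SecondCountableTopology X] {t ε : ℝ} (ht : 0 ≤ t)
    {s : Finset X} (hs : univ ⊆ ⋃ x ∈ s, closedBall x ε) :
    maxDiv X t ≤ s.card * Real.exp (2 * t * ε) := by
  refine csSup_le ⟨_, .dirac (Classical.arbitrary X), inferInstance, rfl⟩ ?_
  rintro _ ⟨μ, _, rfl⟩
  exact inv_integral_le_card_mul_exp ht μ hs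

theorem inv_integral_le_maxDiv [CompactSpace X] {t : ℝ} (ht : 0 ≤ t) (μ : Measure X)
    [IsProbabilityMeasure μ] :
    (∫ a, ∫ b, Real.exp (-(t * dist a b)) ∂μ ∂μ)⁻¹ ≤ maxDiv X t := by
  obtain ⟨C, -, hC, hcov⟩ := finite_cover_balls_of_compact (isCompact_univ (X := X)) one_pos
  have hs : univ ⊆ ⋃ x ∈ hC.toFinset, closedBall x 1 := by
    simpa using hcov.trans (biUnion_mono subset_rfl fun x _ => ball_subset_closedBall)
  refine le_csSup ⟨hC.toFinset.card * Real.exp (2 * t * 1), ?_⟩ ⟨μ, inferInstance, rfl⟩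
  rintro _ ⟨ν, _, rfl⟩
  exact inv_integral_le_card_mul_exp ht ν hs

theorem integral_uniformMeasure_exp_neg_mul_dist_le {t δ : ℝ} (ht : 0 ≤ t) (s : Finset X)
    (hsep : (s : Set X).Pairwise (fun x y => δ < dist x y)) :
    ∫ a, ∫ b, Real.exp (-(t * dist a b)) ∂s.uniformMeasure ∂s.uniformMeasure
      ≤ (s.card : ℝ)⁻¹ + Real.exp (-(t * δ)) := by
  classical
  have hK : ∀ x ∈ s, ∀ y ∈ s,
      Real.exp (-(t * dist x y)) ≤ (if x = y then 1 else 0) + Real.exp (-(t * δ)) := by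
    intro x hx y hy
    split_ifs with hxy
    · simp [hxy, (Real.exp_pos _).le]
    · rw [zero_add, Real.exp_le_exp, neg_le_neg_iff]
      exact mul_le_mul_of_nonneg_left (hsep hx hy hxy).le ht
  simp_rw [Finset.integral_uniformMeasure]
  calc (s.card : ℝ)⁻¹ * ∑ x ∈ s, (s.card : ℝ)⁻¹ * ∑ y ∈ s, Real.exp (-(t * dist x y))
      ≤ (s.card : ℝ)⁻¹ * ∑ x ∈ s, (s.card : ℝ)⁻¹ *
          ∑ y ∈ s, ((if x = y then 1 else 0) + Real.exp (-(t * δ))) := by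
        gcongr with x hx y hy
        exact hK x hx y hy
    _ = (s.card : ℝ)⁻¹ * ∑ x ∈ s, (s.card : ℝ)⁻¹ * (1 + s.card * Real.exp (-(t * δ))) := by
        refine congrArg _ (Finset.sum_congr rfl fun x hx => ?_)
        rw [Finset.sum_add_distrib, Finset.sum_ite_eq, if_pos hx, Finset.sum_const,
          nsmul_eq_mul]
    _ ≤ (s.card : ℝ)⁻¹ + Real.exp (-(t * δ)) := by
        rcases s.eq_empty_or_nonempty with rfl | hs
        · simp [(Real.exp_pos _).le]
        · refine le_of_eq ?_
          rw [Finset.sum_const, nsmul_eq_mul]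
          field_simp

theorem inv_card_add_exp_inv_le_maxDiv [CompactSpace X] {t δ : ℝ} (ht : 0 ≤ t) {s : Finset X}
    (hs : s.Nonempty) (hsep : (s : Set X).Pairwise (fun x y => δ < dist x y)) :
    ((s.card : ℝ)⁻¹ + Real.exp (-(t * δ)))⁻¹ ≤ maxDiv X t := by
  have := Finset.isProbabilityMeasure_uniformMeasure hs
  have hI : 0 < ∫ a, ∫ b, Real.exp (-(t * dist a b)) ∂s.uniformMeasure ∂s.uniformMeasure := by
    simp_rw [Finset.integral_uniformMeasure]
    have hn : (0 : ℝ) < (s.card : ℝ)⁻¹ := inv_pos.2 (Nat.cast_pos.2 hs.card_pos)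
    exact mul_pos hn <| Finset.sum_pos (fun _ _ =>
      mul_pos hn (Finset.sum_pos (fun _ _ => Real.exp_pos _) hs)) hs
  exact (inv_anti₀ hI (integral_uniformMeasure_exp_neg_mul_dist_le ht s hsep)).trans
    (inv_integral_le_maxDiv ht _)

end MaxDiv

theorem Filter.Tendsto.div_log_comp {f δ : ℝ → ℝ} {D : ℝ}
    (hf : Tendsto (fun ε => f ε / Real.log (1 / ε)) (𝓝[>] 0) (𝓝 D))
    (hδ : Tendsto δ atTop (𝓝[>] 0))
    (hlog : Tendsto (fun t => Real.log (1 / δ t) / Real.log t) atTop (𝓝 1)) :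
    Tendsto (fun t => f (δ t) / Real.log t) atTop (𝓝 D) := by
  have h := (hf.comp hδ).mul hlog
  rw [mul_one] at h
  refine h.congr' ?_
  filter_upwards [hlog.eventually_ne one_ne_zero] with t ht
  exact div_mul_div_cancel₀ (div_ne_zero_iff.1 ht).1

theorem tendsto_log_sq_div_nhdsGT_zero :
    Tendsto (fun t => Real.log t ^ 2 / t) atTop (𝓝[>] 0) := by
  refine tendsto_nhdsWithin_iff.2 ⟨?_, ?_⟩
  · simpa using Real.tendsto_pow_log_div_mul_add_atTop 1 0 2 one_ne_zero
  · filter_upwards [eventually_gt_atTop 1] with t ht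
    have := Real.log_pos ht
    exact Set.mem_Ioi.2 (by positivity)

theorem tendsto_log_one_div_log_sq_div_div_log :
    Tendsto (fun t => Real.log (1 / (Real.log t ^ 2 / t)) / Real.log t) atTop (𝓝 1) := by
  have hloglog : Tendsto (fun t => Real.log (Real.log t) / Real.log t) atTop (𝓝 0) := by
    simpa [Function.comp_def] using
      (Real.tendsto_pow_log_div_mul_add_atTop 1 0 1 one_ne_zero).comp Real.tendsto_log_atTop
  have h := (hloglog.const_mul 2).const_sub 1
  rw [mul_zero, sub_zero] at h
  refine h.congr' ?_
  filter_upwards [eventually_gt_atTop 0, Real.tendsto_log_atTop.eventually_gt_atTop 0]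
    with t ht hlog
  rw [one_div_div, Real.log_div ht.ne' (by positivity), Real.log_pow]
  field_simp
  push_cast
  ring

theorem div_two_le_inv_inv_add_exp_neg {N x : ℝ} (hN : 0 < N) (hNx : N ≤ Real.exp x) :
    N / 2 ≤ (N⁻¹ + Real.exp (-x))⁻¹ := by
  have hexp : Real.exp (-x) ≤ N⁻¹ := by
    rw [Real.exp_neg]
    exact inv_anti₀ hN hNx
  rw [div_eq_mul_inv, ← inv_inv N, ← mul_inv, inv_inv]
  gcongr
  linarith

theorem eventually_le_exp_log_sq_of_tendsto_log_div_log {f : ℝ → ℝ} {D : ℝ}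
    (hf : Tendsto (fun t => Real.log (f t) / Real.log t) atTop (𝓝 D))
    (hpos : ∀ᶠ t in atTop, 0 < f t) :
    ∀ᶠ t in atTop, f t ≤ Real.exp (Real.log t ^ 2) := by
  filter_upwards [hpos, eventually_gt_atTop 1, hf.eventually (eventually_lt_nhds (lt_add_one D)),
    Real.tendsto_log_atTop.eventually_ge_atTop (D + 1)] with t hft ht hfD hDt
  have hlog : 0 < Real.log t := Real.log_pos ht
  rw [div_lt_iff₀ hlog] at hfD
  rw [← Real.log_le_iff_le_exp hft]
  nlinarith

theorem tendsto_log_div_log_of_bounds {A : ℝ → ℝ} {N : ℝ → ℕ} {D : ℝ}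
    (hD : Tendsto (fun ε => Real.log (N ε) / Real.log (1 / ε)) (𝓝[>] 0) (𝓝 D))
    (hN : ∀ ε > 0, 0 < N ε)
    (hup : ∀ t > 0, A t ≤ N t⁻¹ * Real.exp 2)
    (hlo : ∀ t > 0, ∀ δ > 0, ((N δ : ℝ)⁻¹ + Real.exp (-(t * δ)))⁻¹ ≤ A t) :
    Tendsto (fun t => Real.log (A t) / Real.log t) atTop (𝓝 D) := by
  set δ : ℝ → ℝ := fun t => Real.log t ^ 2 / t
  have hδ : Tendsto δ atTop (𝓝[>] 0) := tendsto_log_sq_div_nhdsGT_zero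
  have hlower : Tendsto (fun t => Real.log (N (δ t)) / Real.log t) atTop (𝓝 D) :=
    hD.div_log_comp hδ tendsto_log_one_div_log_sq_div_div_log
  have hupper : Tendsto (fun t => Real.log (N t⁻¹) / Real.log t) atTop (𝓝 D) := by
    refine hD.div_log_comp tendsto_inv_atTop_nhdsGT_zero (tendsto_const_nhds.congr' ?_)
    filter_upwards [Real.tendsto_log_atTop.eventually_gt_atTop 0] with t ht
    rw [one_div, inv_inv, div_self ht.ne']
  have hinv_log (c : ℝ) : Tendsto (fun t => c / Real.log t) atTop (𝓝 0) :=
    tendsto_const_nhds.div_atTop Real.tendsto_log_atTop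
  have hlower' := hlower.sub (hinv_log (Real.log 2))
  have hupper' := hupper.add (hinv_log 2)
  rw [sub_zero] at hlower'
  rw [add_zero] at hupper'
  have hδ_pos : ∀ᶠ t in atTop, 0 < δ t := hδ.eventually eventually_mem_nhdsWithin
  have hNδ_le := eventually_le_exp_log_sq_of_tendsto_log_div_log hlower
    (hδ_pos.mono fun t ht => Nat.cast_pos.2 (hN _ ht))
  refine tendsto_of_tendsto_of_tendsto_of_le_of_le' hlower' hupper' ?_ ?_
  · filter_upwards [eventually_gt_atTop 1, hδ_pos, hNδ_le] with t ht hδt hNexp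
    have hNδ : (0 : ℝ) < N (δ t) := Nat.cast_pos.2 (hN _ hδt)
    have htδ : Real.log t ^ 2 = t * δ t := by simp only [δ]; field_simp
    rw [htδ] at hNexp
    have hA := Real.log_le_log (by positivity)
      ((div_two_le_inv_inv_add_exp_neg hNδ hNexp).trans (hlo t (by linarith) _ hδt))
    rw [Real.log_div hNδ.ne' two_ne_zero] at hA
    rw [← sub_div]
    exact div_le_div_of_nonneg_right hA (Real.log_pos ht).le
  · filter_upwards [eventually_gt_atTop 1] with t ht
    have ht0 : 0 < t := by linarith
    have hNt : (0 : ℝ) < N t⁻¹ := Nat.cast_pos.2 (hN _ (inv_pos.2 ht0))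
    have hA : 0 < A t := (by have := hN 1 one_pos; positivity : (0 : ℝ) < _).trans_le
      (hlo t ht0 1 one_pos)
    have hlogA : Real.log (A t) ≤ Real.log (N t⁻¹) + 2 := by
      rw [← Real.log_exp 2, ← Real.log_mul hNt.ne' (Real.exp_pos 2).ne']
      exact Real.log_le_log hA (hup t ht0)
    rw [← add_div]
    exact div_le_div_of_nonneg_right hlogA (Real.log_pos ht).le

/-- If a nonempty compact metric space `X` has Minkowski dimension `D`
(i.e. `log N(X,ε) / log (1/ε) → D` as `ε → 0⁺`, where `N(X,ε)` is the minimal number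
of closed `ε`-balls covering `X`), then `log |tX|₊ / log t → D` as `t → ∞`, where
`|tX|₊` is the maximum diversity of `X` with metric scaled by `t`. -/
theorem stmt_18 {X : Type*} [MetricSpace X] [CompactSpace X] [Nonempty X]
    [MeasurableSpace X] [BorelSpace X]
    (N : ℝ → ℕ)
    (hN : ∀ ε : ℝ, 0 < ε →
      (∃ s : Finset X, s.card = N ε ∧
        (Set.univ : Set X) ⊆ ⋃ x ∈ s, Metric.closedBall x ε) ∧
      (∀ s : Finset X, (Set.univ : Set X) ⊆ ⋃ x ∈ s, Metric.closedBall x ε →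
        N ε ≤ s.card))
    (D : ℝ)
    (hD : Tendsto (fun ε : ℝ => Real.log (N ε) / Real.log (1 / ε))
      (nhdsWithin 0 (Set.Ioi 0)) (𝓝 D)) :
    Tendsto (fun t : ℝ => Real.log (maxDiv X t) / Real.log t) atTop (𝓝 D) := by
  have hN_pos : ∀ ε > 0, 0 < N ε := fun ε hε => by
    obtain ⟨s, hs, hcov⟩ := (hN ε hε).1
    exact hs ▸ (Finset.nonempty_of_univ_subset_biUnion hcov).card_pos
  refine tendsto_log_div_log_of_bounds hD hN_pos (fun t ht => ?_) (fun t ht δ hδ => ?_)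
  · obtain ⟨s, hs, hcov⟩ := (hN t⁻¹ (inv_pos.2 ht)).1
    simpa [hs, mul_assoc, ht.ne'] using maxDiv_le_card_mul_exp ht.le hcov
  · obtain ⟨s, hsep, hcov⟩ := exists_finset_pairwise_lt_dist_cover (X := X) hδ
    have := hN_pos δ hδ
    calc ((N δ : ℝ)⁻¹ + Real.exp (-(t * δ)))⁻¹
        ≤ ((s.card : ℝ)⁻¹ + Real.exp (-(t * δ)))⁻¹ := by
          gcongr
          exact (hN δ hδ).2 s hcov
      _ ≤ maxDiv X t :=
          inv_card_add_exp_inv_le_maxDiv ht.le (Finset.nonempty_of_univ_subset_biUnion hcov) hsep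
end
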